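/- arXiv:2306.06481 — 11 statements merged into one kernel-verified Lean document; each statement's English description precedes it below -/
import Mathlib

section
/- Let A ∈ ℝ^{n×n}, let U_{d+1} = [U_d, u_{d+1}] ∈ ℝ^{n×(d+1)} and let H̄_d ∈ ℝ^{(d+1)×d} have the block form H̄_d = [H_d; h_{d+1,d} e_d^T] with H_d ∈ ℝ^{d×d} and h_{d+1,d} ∈ ℝ, and assume the Arnoldi-type relation A U_d = U_{d+1} H̄_d holds. Let S ∈ ℝ^{s×n} and suppose S U_{d+1} = Q_{d+1} T_{d+1}, where Q_{d+1} = [Q_d, q] ∈ ℝ^{s×(d+1)} has orthonormal columns and T_{d+1} = [[T_d, t],[0, τ_{d+1}]] is upper triangular with T_d ∈ ℝ^{d×d} invertible. Then, with r := h_{d+1,d} T_d^{-1} t, the sketched Arnoldi relation S A U_d = S U_d (H_d + r e_d^T) + τ_{d+1} h_{d+1,d} q e_d^T holds, and moreover q is orthogonal to every column of S U_d. -/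
/-!
Sketching the Arnoldi relation gives `S A U = S U H + h (S u) e_dᵀ`. Read column block by
column block, the QR factorization `S U₁ = Q₁ T₁` says `S U = Q T` (the block below `T` is
zero) and `S u = Q t + τ q`; since `T` is invertible, `h Q t = S U (h T⁻¹ t)`. Orthonormality
of the columns of `Q₁` gives `qᵀ Q = 0`, hence `qᵀ S U = qᵀ Q T = 0`.
-/

open Matrix

namespace Matrix

variable {R : Type*} [CommRing R] {l m p : Type*} {k : ℕ}

theorem mul_eq_add_vecMulVec_of_snoc (M : Matrix m (Fin k) R) (v : m → R)
    (M₁ : Matrix m (Fin (k + 1)) R) (hM₁ : ∀ i, M₁ i = Fin.snoc (M i) (v i))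
    (N : Matrix (Fin (k + 1)) p R) :
    M₁ * N = M * N.submatrix Fin.castSucc id + vecMulVec v (N (Fin.last k)) := by
  ext i j
  simp [mul_apply, vecMulVec_apply, Fin.sum_univ_castSucc, hM₁]

theorem mul_row_eq_snoc [Fintype m] (S : Matrix l m R) (M : Matrix m (Fin k) R) (v : m → R)
    (M₁ : Matrix m (Fin (k + 1)) R) (hM₁ : ∀ i, M₁ i = Fin.snoc (M i) (v i)) (i : l) :
    (S * M₁) i = Fin.snoc ((S * M) i) ((S *ᵥ v) i) := by
  ext j
  refine Fin.lastCases ?_ (fun j => ?_) j <;> simp [mul_apply, mulVec, dotProduct, hM₁]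

theorem mul_row_eq_snoc_of_blockTriangular (Q : Matrix l (Fin k) R) (q : l → R)
    (Q₁ : Matrix l (Fin (k + 1)) R) (hQ₁ : ∀ i, Q₁ i = Fin.snoc (Q i) (q i))
    (T : Matrix (Fin k) (Fin k) R) (t : Fin k → R) (τ : R)
    (T₁ : Matrix (Fin (k + 1)) (Fin (k + 1)) R)
    (hT₁a : ∀ i j, T₁ i.castSucc j.castSucc = T i j)
    (hT₁b : ∀ i, T₁ i.castSucc (Fin.last k) = t i)
    (hT₁c : ∀ j : Fin k, T₁ (Fin.last k) j.castSucc = 0)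
    (hT₁d : T₁ (Fin.last k) (Fin.last k) = τ) (i : l) :
    (Q₁ * T₁) i = Fin.snoc ((Q * T) i) ((Q *ᵥ t + τ • q) i) := by
  rw [mul_eq_add_vecMulVec_of_snoc Q q Q₁ hQ₁]
  ext j
  refine Fin.lastCases ?_ (fun j => ?_) j <;>
    simp [mul_apply, mulVec, dotProduct, vecMulVec_apply, hT₁a, hT₁b, hT₁c, hT₁d, mul_comm]

theorem vecMul_eq_zero_of_snoc_of_orthonormal [Fintype l] (Q : Matrix l (Fin k) R) (q : l → R)
    (Q₁ : Matrix l (Fin (k + 1)) R) (hQ₁ : ∀ i, Q₁ i = Fin.snoc (Q i) (q i))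
    (hQ₁orth : Q₁ᵀ * Q₁ = 1) : q ᵥ* Q = 0 := by
  ext j
  have h := congrFun (congrFun hQ₁orth (Fin.last k)) j.castSucc
  simpa [mul_apply, vecMul, dotProduct, hQ₁, one_apply, (Fin.castSucc_lt_last j).ne'] using h

end Matrix

theorem sketched_arnoldi_relation_general
    {n s d : ℕ}
    (A : Matrix (Fin n) (Fin n) ℝ)
    (U : Matrix (Fin n) (Fin (d + 1)) ℝ) (u : Fin n → ℝ)
    (U1 : Matrix (Fin n) (Fin (d + 2)) ℝ)
    (hU1 : ∀ i, U1 i = Fin.snoc (U i) (u i))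
    (H : Matrix (Fin (d + 1)) (Fin (d + 1)) ℝ) (h : ℝ)
    (Hbar : Matrix (Fin (d + 2)) (Fin (d + 1)) ℝ)
    (hHbarTop : ∀ (i : Fin (d + 1)) (j : Fin (d + 1)), Hbar i.castSucc j = H i j)
    (hHbarBot : ∀ j : Fin (d + 1),
      Hbar (Fin.last (d + 1)) j = h * (Pi.single (Fin.last d) 1 : Fin (d + 1) → ℝ) j)
    (hArnoldi : A * U = U1 * Hbar)
    (S : Matrix (Fin s) (Fin n) ℝ)
    (Q : Matrix (Fin s) (Fin (d + 1)) ℝ) (q : Fin s → ℝ)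
    (Q1 : Matrix (Fin s) (Fin (d + 2)) ℝ)
    (hQ1 : ∀ i, Q1 i = Fin.snoc (Q i) (q i))
    (hQorth : Q1ᵀ * Q1 = 1)
    (T : Matrix (Fin (d + 1)) (Fin (d + 1)) ℝ) (t : Fin (d + 1) → ℝ) (τ : ℝ)
    (T1 : Matrix (Fin (d + 2)) (Fin (d + 2)) ℝ)
    (hT1a : ∀ i j : Fin (d + 1), T1 i.castSucc j.castSucc = T i j)
    (hT1b : ∀ i : Fin (d + 1), T1 i.castSucc (Fin.last (d + 1)) = t i)
    (hT1c : ∀ j : Fin (d + 1), T1 (Fin.last (d + 1)) j.castSucc = 0)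
    (hT1d : T1 (Fin.last (d + 1)) (Fin.last (d + 1)) = τ)
    (hQR : S * U1 = Q1 * T1)
    (hTdet : T.det ≠ 0) :
    S * A * U =
        S * U * (H + vecMulVec (h • T⁻¹.mulVec t) (Pi.single (Fin.last d) 1 : Fin (d + 1) → ℝ))
          + (τ * h) • vecMulVec q (Pi.single (Fin.last d) 1 : Fin (d + 1) → ℝ)
      ∧ ∀ j : Fin (d + 1), dotProduct q (fun i => (S * U) i j) = 0 := by
  set e : Fin (d + 1) → ℝ := Pi.single (Fin.last d) 1
  have hQR_rows i := Fin.snoc_injective2 <| (mul_row_eq_snoc S U u U1 hU1 i).symm.trans <|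
    (congrFun hQR i).trans <|
      mul_row_eq_snoc_of_blockTriangular Q q Q1 hQ1 T t τ T1 hT1a hT1b hT1c hT1d i
  have hSU : S * U = Q * T := funext fun i => (hQR_rows i).1
  have hSu : S *ᵥ u = Q *ᵥ t + τ • q := funext fun i => (hQR_rows i).2
  have hHbar : U1 * Hbar = U * H + vecMulVec u (h • e) := by
    have hTop : Hbar.submatrix Fin.castSucc id = H := ext hHbarTop
    have hBot : Hbar (Fin.last (d + 1)) = h • e := funext hHbarBot
    rw [mul_eq_add_vecMulVec_of_snoc U u U1 hU1, hTop, hBot]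
  have hQt : (S * U) *ᵥ (h • T⁻¹ *ᵥ t) = h • Q *ᵥ t := by
    rw [hSU, mulVec_smul, mulVec_mulVec, Matrix.mul_assoc,
      mul_nonsing_inv T (isUnit_iff_ne_zero.mpr hTdet), Matrix.mul_one]
  refine ⟨?_, fun j => congrFun (?_ : q ᵥ* (S * U) = 0) j⟩
  · calc S * A * U = S * U * H + h • vecMulVec (S *ᵥ u) e := by
          rw [Matrix.mul_assoc, hArnoldi, hHbar, Matrix.mul_add, ← Matrix.mul_assoc,
            mul_vecMulVec, vecMulVec_smul]
      _ = _ := by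
          rw [hSu, Matrix.mul_add, mul_vecMulVec, hQt, add_vecMulVec, smul_vecMulVec,
            smul_vecMulVec, smul_add, smul_smul, mul_comm h τ, add_assoc]
  · rw [hSU, ← vecMul_vecMul, vecMul_eq_zero_of_snoc_of_orthonormal Q q Q1 hQ1 hQorth,
      zero_vecMul]

/-- **Sketched Arnoldi relation** (Proposition 3.1).
`U1 = [U, u]` is `n × (d+2)` (we write the paper's `d` as `d+1` so that the last
index exists), `Hbar = [H; h·e_dᵀ]` and `A U = U1 Hbar` is the Arnoldi-type relation.
Given a thin QR decomposition `S U1 = Q1 T1` with `Q1 = [Q, q]` having orthonormal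
columns and `T1 = [[T, t],[0, τ]]` upper triangular with `T` invertible, one has
`S A U = S U (H + r e_dᵀ) + τ h q e_dᵀ` with `r = h T⁻¹ t`, and `q` is orthogonal
to every column of `S U`. -/
theorem sketched_arnoldi_relation
    {n s d : ℕ}
    (A : Matrix (Fin n) (Fin n) ℝ)
    (U : Matrix (Fin n) (Fin (d + 1)) ℝ) (u : Fin n → ℝ)
    (U1 : Matrix (Fin n) (Fin (d + 2)) ℝ)
    (hU1 : ∀ i, U1 i = Fin.snoc (U i) (u i))
    (H : Matrix (Fin (d + 1)) (Fin (d + 1)) ℝ) (h : ℝ)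
    (Hbar : Matrix (Fin (d + 2)) (Fin (d + 1)) ℝ)
    (hHbarTop : ∀ (i : Fin (d + 1)) (j : Fin (d + 1)), Hbar i.castSucc j = H i j)
    (hHbarBot : ∀ j : Fin (d + 1),
      Hbar (Fin.last (d + 1)) j = h * (Pi.single (Fin.last d) 1 : Fin (d + 1) → ℝ) j)
    (hArnoldi : A * U = U1 * Hbar)
    (S : Matrix (Fin s) (Fin n) ℝ)
    (Q : Matrix (Fin s) (Fin (d + 1)) ℝ) (q : Fin s → ℝ)
    (Q1 : Matrix (Fin s) (Fin (d + 2)) ℝ)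
    (hQ1 : ∀ i, Q1 i = Fin.snoc (Q i) (q i))
    (hQorth : Q1ᵀ * Q1 = 1)
    (T : Matrix (Fin (d + 1)) (Fin (d + 1)) ℝ) (t : Fin (d + 1) → ℝ) (τ : ℝ)
    (T1 : Matrix (Fin (d + 2)) (Fin (d + 2)) ℝ)
    (hT1a : ∀ i j : Fin (d + 1), T1 i.castSucc j.castSucc = T i j)
    (hT1b : ∀ i : Fin (d + 1), T1 i.castSucc (Fin.last (d + 1)) = t i)
    (hT1c : ∀ j : Fin (d + 1), T1 (Fin.last (d + 1)) j.castSucc = 0)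
    (hT1d : T1 (Fin.last (d + 1)) (Fin.last (d + 1)) = τ)
    (hT1upper : ∀ i j : Fin (d + 2), j < i → T1 i j = 0)
    (hQR : S * U1 = Q1 * T1)
    (hTdet : T.det ≠ 0) :
    S * A * U =
        S * U * (H + vecMulVec (h • T⁻¹.mulVec t) (Pi.single (Fin.last d) 1 : Fin (d + 1) → ℝ))
          + (τ * h) • vecMulVec q (Pi.single (Fin.last d) 1 : Fin (d + 1) → ℝ)
      ∧ ∀ j : Fin (d + 1), dotProduct q (fun i => (S * U) i j) = 0 :=
  sketched_arnoldi_relation_general A U u U1 hU1 H h Hbar hHbarTop hHbarBot hArnoldi S Q q Q1 hQ1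
    hQorth T t τ T1 hT1a hT1b hT1c hT1d hQR hTdet
end

section
/- Let A ∈ ℝ^{n×n}, U_{d+1} = [U_d, u_{d+1}] ∈ ℝ^{n×(d+1)}, H_d ∈ ℝ^{d×d}, h_{d+1,d} ∈ ℝ with A U_d = U_{d+1} [H_d; h_{d+1,d} e_d^T]. Suppose S ∈ ℝ^{s×n} and S U_{d+1} = Q_{d+1} T_{d+1} with Q_{d+1} = [Q_d, q] having orthonormal columns and T_{d+1} = [[T_d, t],[0, τ_{d+1}]] upper triangular with T_d invertible; let τ_d denote the (d,d) entry of T_d (nonzero by invertibility). Then the whitened-sketched Arnoldi relation holds: S A (U_d T_d^{-1}) = Q_d (T_d H_d T_d^{-1} + (h_{d+1,d}/τ_d) t e_d^T) + (τ_{d+1} h_{d+1,d}/τ_d) q e_d^T. -/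
open Matrix

private lemma vecMulVec_mul' {α β γ : Type*} [Fintype β] (a : α → ℝ) (b : β → ℝ)
    (M : Matrix β γ ℝ) : vecMulVec a b * M = vecMulVec a (b ᵥ* M) := by
  ext i j
  simp [mul_apply, vecMulVec_apply, vecMul, dotProduct, Finset.mul_sum, mul_assoc]

private lemma mul_vecMulVec' {α β γ : Type*} [Fintype β] (M : Matrix α β ℝ) (a : β → ℝ)
    (b : γ → ℝ) : M * vecMulVec a b = vecMulVec (M *ᵥ a) b := by
  ext i j
  simp [mul_apply, vecMulVec_apply, mulVec, dotProduct, Finset.sum_mul, mul_assoc]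

private lemma vecMulVec_smul_right {α γ : Type*} (a : α → ℝ) (c : ℝ) (b : γ → ℝ) :
    vecMulVec a (c • b) = c • vecMulVec a b := by
  ext i j
  simp [vecMulVec_apply]
  ring

private lemma single_vecMul_inv {d : ℕ}
    (T : Matrix (Fin (d + 1)) (Fin (d + 1)) ℝ)
    (hupper : ∀ i j : Fin (d + 1), j < i → T i j = 0)
    (hTdet : T.det ≠ 0) :
    (Pi.single (Fin.last d) 1 : Fin (d+1) → ℝ) ᵥ* T⁻¹
      = (T (Fin.last d) (Fin.last d))⁻¹ • (Pi.single (Fin.last d) 1 : Fin (d+1) → ℝ) := by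
  have hbt : T.BlockTriangular id := fun i j hij => hupper i j hij
  have hτ : T (Fin.last d) (Fin.last d) ≠ 0 := by
    intro h0
    apply hTdet
    rw [Matrix.det_of_upperTriangular hbt]
    exact Finset.prod_eq_zero (Finset.mem_univ _) h0
  have h1 : (Pi.single (Fin.last d) 1 : Fin (d+1) → ℝ) ᵥ* T
      = (T (Fin.last d) (Fin.last d)) • (Pi.single (Fin.last d) 1 : Fin (d+1) → ℝ) := by
    ext j
    simp only [vecMul, dotProduct, Pi.single_apply, ite_mul, one_mul, zero_mul,
      Pi.smul_apply, smul_eq_mul]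
    rw [Finset.sum_ite_eq' Finset.univ (Fin.last d) (fun x => T x j)]
    simp only [Finset.mem_univ, if_true]
    rcases eq_or_lt_of_le (Fin.le_last j) with hj | hj
    · simp [hj]
    · rw [hupper _ _ hj]
      simp [hj.ne]
  have h2 := congrArg (fun v => v ᵥ* T⁻¹) h1
  simp only [vecMul_vecMul] at h2
  rw [Matrix.mul_nonsing_inv T (isUnit_iff_ne_zero.mpr hTdet), vecMul_one] at h2
  rw [Matrix.smul_vecMul] at h2
  conv_rhs => rw [h2]
  rw [smul_smul, inv_mul_cancel₀ hτ, one_smul]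

/-- **Whitened-sketched Arnoldi relation** (eq. (11) of the paper).
With `U1 = [U, u]`, the Arnoldi-type relation `A U = U1 [H; h e_dᵀ]`, and a thin QR
decomposition `S U1 = Q1 T1`, `Q1 = [Q, q]` with orthonormal columns,
`T1 = [[T, t],[0, τ]]` upper triangular with `T` invertible and `(d,d)` entry `τd`,
one has `S A (U T⁻¹) = Q (T H T⁻¹ + (h/τd) t e_dᵀ) + (τ h/τd) q e_dᵀ`.
(The paper's `d` is written as `d+1` so that the last index exists.) -/
theorem whitened_sketched_arnoldi_relation
    {n s d : ℕ}
    (A : Matrix (Fin n) (Fin n) ℝ)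
    (U : Matrix (Fin n) (Fin (d + 1)) ℝ) (u : Fin n → ℝ)
    (U1 : Matrix (Fin n) (Fin (d + 2)) ℝ)
    (hU1 : ∀ i, U1 i = Fin.snoc (U i) (u i))
    (H : Matrix (Fin (d + 1)) (Fin (d + 1)) ℝ) (h : ℝ)
    (Hbar : Matrix (Fin (d + 2)) (Fin (d + 1)) ℝ)
    (hHbarTop : ∀ (i : Fin (d + 1)) (j : Fin (d + 1)), Hbar i.castSucc j = H i j)
    (hHbarBot : ∀ j : Fin (d + 1),
      Hbar (Fin.last (d + 1)) j = h * (Pi.single (Fin.last d) 1 : Fin (d + 1) → ℝ) j)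
    (hArnoldi : A * U = U1 * Hbar)
    (S : Matrix (Fin s) (Fin n) ℝ)
    (Q : Matrix (Fin s) (Fin (d + 1)) ℝ) (q : Fin s → ℝ)
    (Q1 : Matrix (Fin s) (Fin (d + 2)) ℝ)
    (hQ1 : ∀ i, Q1 i = Fin.snoc (Q i) (q i))
    (hQorth : Q1ᵀ * Q1 = 1)
    (T : Matrix (Fin (d + 1)) (Fin (d + 1)) ℝ) (t : Fin (d + 1) → ℝ) (τ : ℝ)
    (T1 : Matrix (Fin (d + 2)) (Fin (d + 2)) ℝ)
    (hT1a : ∀ i j : Fin (d + 1), T1 i.castSucc j.castSucc = T i j)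
    (hT1b : ∀ i : Fin (d + 1), T1 i.castSucc (Fin.last (d + 1)) = t i)
    (hT1c : ∀ j : Fin (d + 1), T1 (Fin.last (d + 1)) j.castSucc = 0)
    (hT1d : T1 (Fin.last (d + 1)) (Fin.last (d + 1)) = τ)
    (hT1upper : ∀ i j : Fin (d + 2), j < i → T1 i j = 0)
    (hQR : S * U1 = Q1 * T1)
    (hTdet : T.det ≠ 0) :
    S * A * (U * T⁻¹) =
        Q * (T * H * T⁻¹ +
          (h / T (Fin.last d) (Fin.last d)) •
            vecMulVec t (Pi.single (Fin.last d) 1 : Fin (d + 1) → ℝ))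
        + (τ * h / T (Fin.last d) (Fin.last d)) •
            vecMulVec q (Pi.single (Fin.last d) 1 : Fin (d + 1) → ℝ) := by
  have hupper : ∀ i j : Fin (d + 1), j < i → T i j = 0 := fun i j hij => by
    rw [← hT1a]
    exact hT1upper _ _ (by simpa using hij)
  have inner : ∀ (k : Fin (d + 1)) (j : Fin (d + 1)), (T1 * Hbar) k.castSucc j
      = (∑ l, T k l * H l j) + t k * (h * (Pi.single (Fin.last d) 1 : Fin (d + 1) → ℝ) j) := by
    intro k j
    rw [mul_apply, Fin.sum_univ_castSucc]
    simp [hT1a, hT1b, hHbarTop, hHbarBot]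
  have innerLast : ∀ j : Fin (d + 1), (T1 * Hbar) (Fin.last (d + 1)) j
      = τ * (h * (Pi.single (Fin.last d) 1 : Fin (d + 1) → ℝ) j) := by
    intro j
    rw [mul_apply, Fin.sum_univ_castSucc]
    simp [hT1c, hT1d, hHbarBot]
  have key : S * A * U = Q * (T * H)
      + h • vecMulVec (Q *ᵥ t) (Pi.single (Fin.last d) 1 : Fin (d + 1) → ℝ)
      + (τ * h) • vecMulVec q (Pi.single (Fin.last d) 1 : Fin (d + 1) → ℝ) := by
    have e1 : S * A * U = Q1 * (T1 * Hbar) := by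
      rw [Matrix.mul_assoc, hArnoldi, ← Matrix.mul_assoc, hQR, Matrix.mul_assoc]
    rw [e1]
    ext i j
    rw [mul_apply, Fin.sum_univ_castSucc]
    simp only [inner, innerLast, hQ1, Fin.snoc_castSucc, Fin.snoc_last,
      Matrix.add_apply, Matrix.smul_apply, vecMulVec_apply, smul_eq_mul,
      mul_apply, mulVec, dotProduct]
    rw [Finset.sum_congr rfl (fun k _ => mul_add (Q i k) _ _), Finset.sum_add_distrib]
    congr 1
    · congr 1
      rw [Finset.sum_mul, Finset.mul_sum]
      exact Finset.sum_congr rfl fun k _ => by ring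
    · ring
  have L1 := single_vecMul_inv T hupper hTdet
  calc S * A * (U * T⁻¹) = (S * A * U) * T⁻¹ := (Matrix.mul_assoc (S * A) U T⁻¹).symm
    _ = (Q * (T * H) + h • vecMulVec (Q *ᵥ t) (Pi.single (Fin.last d) 1)
          + (τ * h) • vecMulVec q (Pi.single (Fin.last d) 1)) * T⁻¹ := by rw [key]
    _ = _ := by
      rw [Matrix.add_mul, Matrix.add_mul, Matrix.smul_mul, Matrix.smul_mul,
        vecMulVec_mul', vecMulVec_mul', L1, vecMulVec_smul_right, vecMulVec_smul_right,
        Matrix.mul_add, Matrix.mul_smul, mul_vecMulVec', Matrix.mul_assoc,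
        smul_smul, smul_smul, div_eq_mul_inv, div_eq_mul_inv]
end

section
/- Let 0 ≤ ε < 1, let U_d ∈ ℝ^{n×d} have full column rank, and let S ∈ ℝ^{s×n} be an ε-subspace embedding for the column span of U_d. Suppose S U_d = Q_d T_d with Q_d having orthonormal columns and T_d upper triangular and invertible. Then for every x ∈ ℝ^d, (1+ε)^{-1/2} ‖x‖ ≤ ‖U_d T_d^{-1} x‖ ≤ (1−ε)^{-1/2} ‖x‖; in particular, for all nonzero x, y ∈ ℝ^d, (‖U_d T_d^{-1} x‖/‖x‖) ≤ √((1+ε)/(1−ε)) · (‖U_d T_d^{-1} y‖/‖y‖), i.e., the 2-norm condition number of U_d T_d^{-1} is at most √((1+ε)/(1−ε)). -/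
open Matrix

/-- Euclidean norm of a vector in `ℝ^m`. -/
noncomputable def eunorm {m : ℕ} (v : Fin m → ℝ) : ℝ := Real.sqrt (∑ i, (v i) ^ 2)

lemma eunorm_nonneg' {m : ℕ} (v : Fin m → ℝ) : 0 ≤ eunorm v := Real.sqrt_nonneg _

lemma eunorm_sq' {m : ℕ} (v : Fin m → ℝ) : eunorm v ^ 2 = ∑ i, (v i) ^ 2 :=
  Real.sq_sqrt (Finset.sum_nonneg fun _ _ => sq_nonneg _)

lemma eunorm_pos' {m : ℕ} {v : Fin m → ℝ} (hv : v ≠ 0) : 0 < eunorm v := by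
  obtain ⟨i, hi⟩ := Function.ne_iff.mp hv
  exact Real.sqrt_pos.mpr (Finset.sum_pos' (fun j _ => sq_nonneg _)
    ⟨i, Finset.mem_univ i, pow_two_pos_of_ne_zero hi⟩)

lemma sqrt_mul_le_sqrt' {c p q : ℝ} (hc : 0 ≤ c) (h : c * p ≤ q) :
    Real.sqrt c * Real.sqrt p ≤ Real.sqrt q := by
  rw [← Real.sqrt_mul hc]; exact Real.sqrt_le_sqrt h

/-- **Conditioning of the whitened basis** (Proposition 3.2).
If `S` is an `ε`-subspace embedding for the column span of the full-column-rank
matrix `U`, and `S U = Q T` is a thin QR decomposition with `T` invertible, then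
`(1+ε)^{-1/2} ‖x‖ ≤ ‖U T⁻¹ x‖ ≤ (1-ε)^{-1/2} ‖x‖` for all `x`; in particular the
2-norm condition number of `U T⁻¹` is at most `√((1+ε)/(1-ε))`. -/
theorem whitened_basis_conditioning
    {n s d : ℕ} {ε : ℝ} (hε0 : 0 ≤ ε) (hε1 : ε < 1)
    (U : Matrix (Fin n) (Fin d) ℝ)
    (hfullrank : Function.Injective U.mulVec)
    (S : Matrix (Fin s) (Fin n) ℝ)
    (hembed : ∀ v ∈ Submodule.span ℝ (Set.range (fun j : Fin d => fun i : Fin n => U i j)),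
      (1 - ε) * eunorm v ^ 2 ≤ eunorm (S.mulVec v) ^ 2 ∧
        eunorm (S.mulVec v) ^ 2 ≤ (1 + ε) * eunorm v ^ 2)
    (Q : Matrix (Fin s) (Fin d) ℝ) (T : Matrix (Fin d) (Fin d) ℝ)
    (hQorth : Qᵀ * Q = 1)
    (hTupper : ∀ i j : Fin d, j < i → T i j = 0)
    (hTdet : T.det ≠ 0)
    (hQR : S * U = Q * T) :
    (∀ x : Fin d → ℝ,
      (Real.sqrt (1 + ε))⁻¹ * eunorm x ≤ eunorm ((U * T⁻¹).mulVec x) ∧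
        eunorm ((U * T⁻¹).mulVec x) ≤ (Real.sqrt (1 - ε))⁻¹ * eunorm x) ∧
    (∀ x y : Fin d → ℝ, x ≠ 0 → y ≠ 0 →
      eunorm ((U * T⁻¹).mulVec x) / eunorm x ≤
        Real.sqrt ((1 + ε) / (1 - ε)) * (eunorm ((U * T⁻¹).mulVec y) / eunorm y)) := by
  have h1ε : (0:ℝ) < 1 - ε := by linarith
  have h1ε' : (0:ℝ) < 1 + ε := by linarith
  have hs1 : 0 < Real.sqrt (1 - ε) := Real.sqrt_pos.mpr h1ε
  have hs2 : 0 < Real.sqrt (1 + ε) := Real.sqrt_pos.mpr h1ε'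
  have hTinv : T * T⁻¹ = 1 := Matrix.mul_nonsing_inv T (isUnit_iff_ne_zero.mpr hTdet)
  have part1 : ∀ x : Fin d → ℝ,
      (Real.sqrt (1 + ε))⁻¹ * eunorm x ≤ eunorm ((U * T⁻¹).mulVec x) ∧
        eunorm ((U * T⁻¹).mulVec x) ≤ (Real.sqrt (1 - ε))⁻¹ * eunorm x := by
    intro x
    set v := (U * T⁻¹).mulVec x with hv
    -- v is in the column span of U
    have hmem : v ∈ Submodule.span ℝ (Set.range (fun j : Fin d => fun i : Fin n => U i j)) := by
      have hv' : v = U.mulVec (T⁻¹.mulVec x) := by rw [hv, Matrix.mulVec_mulVec]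
      set w := T⁻¹.mulVec x with hw
      have h : U.mulVec w = ∑ j, w j • (fun i => U i j) := by
        funext i; simp [Matrix.mulVec, dotProduct, Finset.sum_apply, mul_comm]
      rw [hv', h]
      exact Submodule.sum_mem _ fun j _ =>
        Submodule.smul_mem _ _ (Submodule.subset_span ⟨j, rfl⟩)
    -- S v = Q x
    have hSv : S.mulVec v = Q.mulVec x := by
      rw [hv, Matrix.mulVec_mulVec, ← Matrix.mul_assoc, hQR, Matrix.mul_assoc, hTinv,
        Matrix.mul_one]
    -- ‖Q x‖² = ‖x‖²
    have hQx : eunorm (Q.mulVec x) ^ 2 = eunorm x ^ 2 := by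
      rw [eunorm_sq', eunorm_sq']
      have hdp : ∀ {m : ℕ} (a : Fin m → ℝ), ∑ i, a i ^ 2 = a ⬝ᵥ a := by
        intro m a; simp [dotProduct, sq]
      rw [hdp, hdp]
      calc Q *ᵥ x ⬝ᵥ Q *ᵥ x = x ᵥ* Qᵀ ⬝ᵥ Q *ᵥ x := by rw [Matrix.vecMul_transpose]
        _ = x ⬝ᵥ Qᵀ *ᵥ (Q *ᵥ x) := (Matrix.dotProduct_mulVec x Qᵀ (Q *ᵥ x)).symm
        _ = x ⬝ᵥ (Qᵀ * Q) *ᵥ x := by rw [Matrix.mulVec_mulVec]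
        _ = x ⬝ᵥ x := by rw [hQorth, Matrix.one_mulVec]
    obtain ⟨hlow, hhigh⟩ := hembed v hmem
    rw [hSv, hQx] at hlow hhigh
    -- translate to norms
    have hA : Real.sqrt (1 - ε) * eunorm v ≤ eunorm x := by
      have := sqrt_mul_le_sqrt' (le_of_lt h1ε) hlow
      rwa [Real.sqrt_sq (eunorm_nonneg' v), Real.sqrt_sq (eunorm_nonneg' x)] at this
    have hB : eunorm x ≤ Real.sqrt (1 + ε) * eunorm v := by
      have h' : eunorm x ^ 2 ≤ (1 + ε) * eunorm v ^ 2 := hhigh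
      have := sqrt_mul_le_sqrt' (le_of_lt h1ε') (le_refl ((1 + ε) * eunorm v ^ 2))
      calc eunorm x = Real.sqrt (eunorm x ^ 2) := (Real.sqrt_sq (eunorm_nonneg' x)).symm
        _ ≤ Real.sqrt ((1 + ε) * eunorm v ^ 2) := Real.sqrt_le_sqrt h'
        _ = Real.sqrt (1 + ε) * eunorm v := by
            rw [Real.sqrt_mul (le_of_lt h1ε'), Real.sqrt_sq (eunorm_nonneg' v)]
    constructor
    · rw [inv_mul_eq_div, div_le_iff₀ hs2]
      linarith [hB, mul_comm (eunorm v) (Real.sqrt (1 + ε))]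
    · rw [inv_mul_eq_div, le_div_iff₀ hs1]
      linarith [hA, mul_comm (eunorm v) (Real.sqrt (1 - ε))]
  refine ⟨part1, ?_⟩
  intro x y hx0 hy0
  have hx := eunorm_pos' hx0
  have hy := eunorm_pos' hy0
  have hL : eunorm ((U * T⁻¹).mulVec x) / eunorm x ≤ (Real.sqrt (1 - ε))⁻¹ := by
    rw [div_le_iff₀ hx]
    calc eunorm ((U * T⁻¹).mulVec x) ≤ (Real.sqrt (1 - ε))⁻¹ * eunorm x := (part1 x).2
      _ = (Real.sqrt (1 - ε))⁻¹ * eunorm x := rfl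
  have hR : (Real.sqrt (1 + ε))⁻¹ ≤ eunorm ((U * T⁻¹).mulVec y) / eunorm y := by
    rw [le_div_iff₀ hy]
    calc (Real.sqrt (1 + ε))⁻¹ * eunorm y ≤ eunorm ((U * T⁻¹).mulVec y) := (part1 y).1
      _ = eunorm ((U * T⁻¹).mulVec y) := rfl
  have hkey : Real.sqrt ((1 + ε) / (1 - ε)) * (Real.sqrt (1 + ε))⁻¹ =
      (Real.sqrt (1 - ε))⁻¹ := by
    rw [Real.sqrt_div (le_of_lt h1ε')]
    field_simp
  calc eunorm ((U * T⁻¹).mulVec x) / eunorm x ≤ (Real.sqrt (1 - ε))⁻¹ := hL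
    _ = Real.sqrt ((1 + ε) / (1 - ε)) * (Real.sqrt (1 + ε))⁻¹ := hkey.symm
    _ ≤ Real.sqrt ((1 + ε) / (1 - ε)) * (eunorm ((U * T⁻¹).mulVec y) / eunorm y) :=
        mul_le_mul_of_nonneg_left hR (Real.sqrt_nonneg _)
end

section
/- Let 0 ≤ ε < 1, let V be a linear subspace of ℝⁿ and S ∈ ℝ^{s×n}. Then the following are equivalent: (i) (1−ε)‖v‖² ≤ ‖Sv‖² ≤ (1+ε)‖v‖² for all v ∈ V; (ii) for all u, v ∈ V, ⟨u,v⟩ − ε‖u‖·‖v‖ ≤ ⟨Su, Sv⟩ ≤ ⟨u,v⟩ + ε‖u‖·‖v‖, where ⟨·,·⟩ is the Euclidean inner product. -/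
open Matrix

/-!
Polarization: for `x, y ∈ V` of equal norm,
`4⟪Tx, Ty⟫ = ‖T(x + y)‖² - ‖T(x - y)‖² ≤ (1 + ε)‖x + y‖² - (1 - ε)‖x - y‖² = 4⟪x, y⟫ + 4ε‖x‖‖y‖`,
the last step by the parallelogram law. General `u, v` reduce to this case after rescaling them to
`‖v‖ • u` and `‖u‖ • v`, and the lower bound follows by replacing `u` with `-u`. Conversely, `u = v`
gives back the norm bounds. The matrix statement is the case `E = EuclideanSpace ℝ (Fin n)`.
-/

open RealInnerProductSpace WithLp

section SubspaceEmbedding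

variable {E F : Type*} [NormedAddCommGroup E] [InnerProductSpace ℝ E]
  [NormedAddCommGroup F] [InnerProductSpace ℝ F]

def IsSubspaceEmbedding (ε : ℝ) (T : E →ₗ[ℝ] F) (V : Submodule ℝ E) : Prop :=
  ∀ v ∈ V, (1 - ε) * ‖v‖ ^ 2 ≤ ‖T v‖ ^ 2 ∧ ‖T v‖ ^ 2 ≤ (1 + ε) * ‖v‖ ^ 2

variable {ε : ℝ} {T : E →ₗ[ℝ] F} {V : Submodule ℝ E} {x y u v : E}

namespace IsSubspaceEmbedding

theorem inner_le_of_norm_eq (hT : IsSubspaceEmbedding ε T V) (hx : x ∈ V) (hy : y ∈ V)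
    (hxy : ‖x‖ = ‖y‖) : ⟪T x, T y⟫ ≤ ⟪x, y⟫ + ε * ‖x‖ * ‖y‖ := by
  have hadd := (hT _ (V.add_mem hx hy)).2
  have hsub := (hT _ (V.sub_mem hx hy)).1
  rw [map_add, norm_add_sq_real, norm_add_sq_real] at hadd
  rw [map_sub, norm_sub_sq_real, norm_sub_sq_real] at hsub
  rw [← hxy] at hadd hsub ⊢
  linarith

theorem inner_le (hT : IsSubspaceEmbedding ε T V) (hu : u ∈ V) (hv : v ∈ V) :
    ⟪T u, T v⟫ ≤ ⟪u, v⟫ + ε * ‖u‖ * ‖v‖ := by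
  rcases eq_or_ne u 0 with rfl | hu0
  · simp
  rcases eq_or_ne v 0 with rfl | hv0
  · simp
  have hpos : 0 < ‖u‖ * ‖v‖ := by positivity
  have h := hT.inner_le_of_norm_eq (V.smul_mem ‖v‖ hu) (V.smul_mem ‖u‖ hv)
    (by rw [norm_smul, norm_smul, norm_norm, norm_norm, mul_comm])
  simp only [map_smul, real_inner_smul_left, real_inner_smul_right, norm_smul, norm_norm] at h
  refine le_of_mul_le_mul_left ?_ hpos
  linarith

theorem le_inner (hT : IsSubspaceEmbedding ε T V) (hu : u ∈ V) (hv : v ∈ V) :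
    ⟪u, v⟫ - ε * ‖u‖ * ‖v‖ ≤ ⟪T u, T v⟫ := by
  have h := hT.inner_le (V.neg_mem hu) hv
  rw [map_neg, inner_neg_left, inner_neg_left, norm_neg] at h
  linarith

end IsSubspaceEmbedding

theorem isSubspaceEmbedding_iff_inner :
    IsSubspaceEmbedding ε T V ↔ ∀ u ∈ V, ∀ v ∈ V,
      ⟪u, v⟫ - ε * ‖u‖ * ‖v‖ ≤ ⟪T u, T v⟫ ∧ ⟪T u, T v⟫ ≤ ⟪u, v⟫ + ε * ‖u‖ * ‖v‖ := by
  refine ⟨fun hT u hu v hv => ⟨hT.le_inner hu hv, hT.inner_le hu hv⟩, fun h v hv => ?_⟩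
  obtain ⟨hlow, hup⟩ := h v hv v hv
  rw [real_inner_self_eq_norm_sq, real_inner_self_eq_norm_sq] at hlow hup
  constructor <;> linarith

end SubspaceEmbedding

theorem norm_toLp_eq_eunorm {m : ℕ} (v : Fin m → ℝ) : ‖toLp 2 v‖ = eunorm v := by
  simp [EuclideanSpace.norm_eq, eunorm]

theorem inner_toLp_eq_dotProduct {m : ℕ} (u v : Fin m → ℝ) : ⟪toLp 2 u, toLp 2 v⟫ = u ⬝ᵥ v := by
  rw [EuclideanSpace.inner_toLp_toLp, star_trivial, dotProduct_comm]

theorem embedding_iff_inner_product_general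
    {n s : ℕ} {ε : ℝ}
    (V : Submodule ℝ (Fin n → ℝ)) (S : Matrix (Fin s) (Fin n) ℝ) :
    (∀ v ∈ V,
      (1 - ε) * eunorm v ^ 2 ≤ eunorm (S.mulVec v) ^ 2 ∧
        eunorm (S.mulVec v) ^ 2 ≤ (1 + ε) * eunorm v ^ 2) ↔
    (∀ u ∈ V, ∀ v ∈ V,
      dotProduct u v - ε * eunorm u * eunorm v ≤
          dotProduct (S.mulVec u) (S.mulVec v) ∧
        dotProduct (S.mulVec u) (S.mulVec v) ≤
          dotProduct u v + ε * eunorm u * eunorm v) := by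
  have h := isSubspaceEmbedding_iff_inner (ε := ε) (T := toLpLin 2 2 S)
    (V := V.comap (WithLp.linearEquiv 2 ℝ (Fin n → ℝ)).toLinearMap)
  simpa only [IsSubspaceEmbedding, Submodule.mem_comap, LinearEquiv.coe_coe,
    WithLp.coe_linearEquiv, (WithLp.toLp_surjective 2).forall, WithLp.ofLp_toLp, toLpLin_toLp,
    toLin'_apply, norm_toLp_eq_eunorm, inner_toLp_eq_dotProduct] using h

/-- Equivalence of the norm formulation (2) and the inner-product formulation (3)
of the `ε`-subspace-embedding property on a subspace `V ⊆ ℝⁿ`. -/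
theorem embedding_iff_inner_product
    {n s : ℕ} {ε : ℝ} (hε0 : 0 ≤ ε) (hε1 : ε < 1)
    (V : Submodule ℝ (Fin n → ℝ)) (S : Matrix (Fin s) (Fin n) ℝ) :
    (∀ v ∈ V,
      (1 - ε) * eunorm v ^ 2 ≤ eunorm (S.mulVec v) ^ 2 ∧
        eunorm (S.mulVec v) ^ 2 ≤ (1 + ε) * eunorm v ^ 2) ↔
    (∀ u ∈ V, ∀ v ∈ V,
      dotProduct u v - ε * eunorm u * eunorm v ≤
          dotProduct (S.mulVec u) (S.mulVec v) ∧
        dotProduct (S.mulVec u) (S.mulVec v) ≤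
          dotProduct u v + ε * eunorm u * eunorm v) :=
  embedding_iff_inner_product_general V S
end

section
/- Let A ∈ ℝ^{n×n}, U_{d+1} = [U_d, u_{d+1}] ∈ ℝ^{n×(d+1)}, H_d ∈ ℝ^{d×d}, h_{d+1,d} ∈ ℝ with A U_d = U_{d+1} [H_d; h_{d+1,d} e_d^T]. Suppose S ∈ ℝ^{s×n} and S U_{d+1} = Q_{d+1} T_{d+1} with Q_{d+1} = [Q_d, q] having orthonormal columns and T_{d+1} = [[T_d, t],[0, τ_{d+1}]] upper triangular with T_d invertible. Then T_d^{-1} Q_d^T (S A U_d) = H_d + r e_d^T, where r = h_{d+1,d} T_d^{-1} t. (Since (S U_d)^† = T_d^{-1} Q_d^T, this says the sketched reduced matrix (S U_d)^† S A U_d equals the rank-one modification H_d + r e_d^T of H_d.) -/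
open Matrix

/-- The sketched reduced matrix `(S U)† S A U = T⁻¹ Qᵀ (S A U)` equals the rank-one
modification `H + r e_dᵀ` of `H`, where `r = h T⁻¹ t`.  Here `U1 = [U, u]`,
`A U = U1 [H; h e_dᵀ]`, and `S U1 = Q1 T1` is a thin QR decomposition with
`Q1 = [Q, q]` having orthonormal columns and `T1 = [[T, t],[0, τ]]` upper
triangular with `T` invertible.  (The paper's `d` is written as `d+1`.) -/
theorem sketched_reduced_matrix
    {n s d : ℕ}
    (A : Matrix (Fin n) (Fin n) ℝ)
    (U : Matrix (Fin n) (Fin (d + 1)) ℝ) (u : Fin n → ℝ)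
    (U1 : Matrix (Fin n) (Fin (d + 2)) ℝ)
    (hU1 : ∀ i, U1 i = Fin.snoc (U i) (u i))
    (H : Matrix (Fin (d + 1)) (Fin (d + 1)) ℝ) (h : ℝ)
    (Hbar : Matrix (Fin (d + 2)) (Fin (d + 1)) ℝ)
    (hHbarTop : ∀ (i : Fin (d + 1)) (j : Fin (d + 1)), Hbar i.castSucc j = H i j)
    (hHbarBot : ∀ j : Fin (d + 1),
      Hbar (Fin.last (d + 1)) j = h * (Pi.single (Fin.last d) 1 : Fin (d + 1) → ℝ) j)
    (hArnoldi : A * U = U1 * Hbar)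
    (S : Matrix (Fin s) (Fin n) ℝ)
    (Q : Matrix (Fin s) (Fin (d + 1)) ℝ) (q : Fin s → ℝ)
    (Q1 : Matrix (Fin s) (Fin (d + 2)) ℝ)
    (hQ1 : ∀ i, Q1 i = Fin.snoc (Q i) (q i))
    (hQorth : Q1ᵀ * Q1 = 1)
    (T : Matrix (Fin (d + 1)) (Fin (d + 1)) ℝ) (t : Fin (d + 1) → ℝ) (τ : ℝ)
    (T1 : Matrix (Fin (d + 2)) (Fin (d + 2)) ℝ)
    (hT1a : ∀ i j : Fin (d + 1), T1 i.castSucc j.castSucc = T i j)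
    (hT1b : ∀ i : Fin (d + 1), T1 i.castSucc (Fin.last (d + 1)) = t i)
    (hT1c : ∀ j : Fin (d + 1), T1 (Fin.last (d + 1)) j.castSucc = 0)
    (hT1d : T1 (Fin.last (d + 1)) (Fin.last (d + 1)) = τ)
    (hT1upper : ∀ i j : Fin (d + 2), j < i → T1 i j = 0)
    (hQR : S * U1 = Q1 * T1)
    (hTdet : T.det ≠ 0) :
    T⁻¹ * Qᵀ * (S * A * U) =
      H + vecMulVec (h • T⁻¹.mulVec t) (Pi.single (Fin.last d) 1 : Fin (d + 1) → ℝ) := by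

  have hQQ : Qᵀ * Q1 = (1 : Matrix (Fin (d+2)) (Fin (d+2)) ℝ).submatrix Fin.castSucc id := by
    ext i k
    have h1 : (Q1ᵀ * Q1) i.castSucc k = (1 : Matrix (Fin (d+2)) (Fin (d+2)) ℝ) i.castSucc k := by
      rw [hQorth]
    simp only [Matrix.mul_apply, Matrix.transpose_apply, Matrix.submatrix_apply, id_eq] at *
    refine Eq.trans ?_ h1
    apply Finset.sum_congr rfl
    intro j _
    rw [hQ1 j, Fin.snoc_castSucc]
  have hsub : ∀ (M : Matrix (Fin (d+2)) (Fin (d+1)) ℝ),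
      (1 : Matrix (Fin (d+2)) (Fin (d+2)) ℝ).submatrix Fin.castSucc id * M
        = M.submatrix Fin.castSucc id := by
    intro M
    ext i j
    simp [Matrix.mul_apply, Matrix.one_apply]
  have key : S * A * U = Q1 * (T1 * Hbar) := by
    calc S * A * U = S * (A * U) := by rw [Matrix.mul_assoc]
    _ = S * (U1 * Hbar) := by rw [hArnoldi]
    _ = (S * U1) * Hbar := by rw [Matrix.mul_assoc]
    _ = Q1 * T1 * Hbar := by rw [hQR]
    _ = Q1 * (T1 * Hbar) := by rw [Matrix.mul_assoc]
  have step : Qᵀ * (S * A * U)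
      = T * H + vecMulVec (h • t) (Pi.single (Fin.last d) 1 : Fin (d + 1) → ℝ) := by
    rw [key, ← Matrix.mul_assoc, hQQ, hsub]
    ext i j
    simp only [Matrix.submatrix_apply, id, Matrix.mul_apply, Matrix.add_apply,
      Matrix.vecMulVec_apply, Pi.smul_apply, smul_eq_mul]
    rw [Fin.sum_univ_castSucc]
    rw [hT1b, hHbarBot]
    have : ∀ k : Fin (d+1), T1 i.castSucc k.castSucc * Hbar k.castSucc j = T i k * H k j := by
      intro k; rw [hT1a, hHbarTop]
    rw [Finset.sum_congr rfl (fun k _ => this k)]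
    ring
  have hTinv : T⁻¹ * T = 1 := Matrix.nonsing_inv_mul T (isUnit_iff_ne_zero.mpr hTdet)
  rw [Matrix.mul_assoc, step, Matrix.mul_add, ← Matrix.mul_assoc, hTinv, Matrix.one_mul]
  congr 1
  ext i j
  simp only [Matrix.mul_apply, Matrix.vecMulVec_apply, Pi.smul_apply, smul_eq_mul,
    Matrix.mulVec, dotProduct]
  rw [Finset.mul_sum, Finset.sum_mul]
  exact Finset.sum_congr rfl fun k _ => by ring
end

section
/- Let M ∈ ℂ^{d×d}, w ∈ ℂ^d, and suppose M + w e_d^T is diagonalizable, i.e., M + w e_d^T = X Λ X^{-1} with Λ = diag(λ₁,…,λ_d) and X invertible. Set α_i = e_d^T X e_i and β_i = e_i^T X^{-1} e₁. Then for every polynomial p ∈ ℂ[X], p(M + w e_d^T) e₁ − p(M) e₁ = Σ_{i=1}^d α_i β_i · p[M, λ_i] · w, where p[M, λ_i] is the evaluation at M of the divided-difference polynomial p[·, λ_i]. -/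
open Matrix

/-- The first-order divided-difference polynomial `p[·, λ] = (p - p(λ)) / (X - λ)`
(exact division in `ℂ[X]`). -/
noncomputable def divDiffPoly (p : Polynomial ℂ) (lam : ℂ) : Polynomial ℂ :=
  (p - Polynomial.C (p.eval lam)) / (Polynomial.X - Polynomial.C lam)

lemma divDiffPoly_mul (p : Polynomial ℂ) (lam : ℂ) :
    (Polynomial.X - Polynomial.C lam) * divDiffPoly p lam
      = p - Polynomial.C (p.eval lam) := by
  rw [divDiffPoly, Polynomial.mul_div_eq_iff_isRoot.mpr]
  simp [Polynomial.IsRoot]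

/-- Eigenvector relation for polynomial evaluation. -/
lemma aeval_mulVec_eig {n : ℕ} (A : Matrix (Fin n) (Fin n) ℂ) (v : Fin n → ℂ) (μ : ℂ)
    (h : A.mulVec v = μ • v) (p : Polynomial ℂ) :
    (Polynomial.aeval A p).mulVec v = p.eval μ • v := by
  induction p using Polynomial.induction_on with
  | C a =>
      simp [Polynomial.aeval_C, Algebra.algebraMap_eq_smul_one, Matrix.smul_mulVec]
  | add q r hq hr =>
      simp [map_add, Matrix.add_mulVec, hq, hr, add_smul]
  | monomial k a hk =>
      have : (Polynomial.aeval A (Polynomial.C a * Polynomial.X ^ (k + 1)))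
          = (Polynomial.aeval A (Polynomial.C a * Polynomial.X ^ k)) * A := by
        simp [pow_succ, mul_assoc, _root_.map_mul]
      rw [this, ← Matrix.mulVec_mulVec, h, Matrix.mulVec_smul, hk]
      simp [pow_succ, smul_smul]
      ring_nf

/-- **Theorem 5.1 (polynomial version).**  If `M + w e_dᵀ = X Λ X⁻¹` is
diagonalizable, then with `α_i = e_dᵀ X e_i` and `β_i = e_iᵀ X⁻¹ e₁`,
`p(M + w e_dᵀ) e₁ - p(M) e₁ = ∑ i, α_i β_i p[M, λ_i] w`.
(The paper's `d` is written as `d+1`.) -/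
theorem rank_one_update_of_matrix_polynomial
    {d : ℕ}
    (M : Matrix (Fin (d + 1)) (Fin (d + 1)) ℂ) (w : Fin (d + 1) → ℂ)
    (Xe : Matrix (Fin (d + 1)) (Fin (d + 1)) ℂ) (Λ : Fin (d + 1) → ℂ)
    (hXe : IsUnit Xe.det)
    (hdiag : M + vecMulVec w (Pi.single (Fin.last d) 1 : Fin (d + 1) → ℂ)
      = Xe * diagonal Λ * Xe⁻¹)
    (p : Polynomial ℂ) :
    (Polynomial.aeval (M + vecMulVec w (Pi.single (Fin.last d) 1 : Fin (d + 1) → ℂ)) p).mulVec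
        (Pi.single 0 1 : Fin (d + 1) → ℂ)
      - (Polynomial.aeval M p).mulVec (Pi.single 0 1 : Fin (d + 1) → ℂ)
    = ∑ i, (Xe (Fin.last d) i * Xe⁻¹ i 0) •
        (Polynomial.aeval M (divDiffPoly p (Λ i))).mulVec w := by
  set u : Fin (d + 1) → ℂ := (Pi.single (Fin.last d) 1 : Fin (d + 1) → ℂ) with hu
  set A := M + vecMulVec w u with hA
  -- columns of Xe
  set x : Fin (d + 1) → Fin (d + 1) → ℂ := fun i => Xe.mulVec (Pi.single i 1) with hx
  have hxval : ∀ i j, x i j = Xe j i := by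
    intro i j; simp [hx, Matrix.mulVec_single]
  have hAX : A * Xe = Xe * diagonal Λ := by
    rw [hdiag, Matrix.mul_assoc, Matrix.nonsing_inv_mul Xe hXe, Matrix.mul_one]
  have heig : ∀ i, A.mulVec (x i) = Λ i • x i := by
    intro i
    rw [hx, Matrix.mulVec_mulVec, hAX, ← Matrix.mulVec_mulVec]
    ext j
    simp [Matrix.mulVec, dotProduct, Pi.single_apply, diagonal_apply, mul_ite,
      Finset.sum_ite_eq', mul_comm]
  -- the rank-one part acting on x i
  have hrank : ∀ i, (vecMulVec w u).mulVec (x i) = Xe (Fin.last d) i • w := by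
    intro i
    ext j
    simp only [Matrix.mulVec, dotProduct, vecMulVec_apply, Pi.smul_apply, smul_eq_mul]
    rw [Finset.sum_congr rfl (fun k _ => by rw [mul_assoc])]
    rw [← Finset.mul_sum]
    have : ∑ k, u k * x i k = Xe (Fin.last d) i := by
      simp [hu, Pi.single_apply, hxval, Finset.sum_ite_eq']
    rw [this]; ring
  have hMx : ∀ i, M.mulVec (x i) = Λ i • x i - Xe (Fin.last d) i • w := by
    intro i
    have h1 := heig i
    rw [hA, Matrix.add_mulVec, hrank i] at h1
    have := sub_eq_of_eq_add' h1.symm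
    rw [← this]
    abel
  -- key divided-difference identity evaluated at M
  have key : ∀ i, (Polynomial.aeval M p).mulVec (x i)
      = p.eval (Λ i) • x i
        - Xe (Fin.last d) i • (Polynomial.aeval M (divDiffPoly p (Λ i))).mulVec w := by
    intro i
    have h2' : divDiffPoly p (Λ i) * (Polynomial.X - Polynomial.C (Λ i))
        = p - Polynomial.C (p.eval (Λ i)) := by
      rw [mul_comm]; exact divDiffPoly_mul p (Λ i)
    have hq' : (Polynomial.aeval M (divDiffPoly p (Λ i))) * (M - Λ i • 1)
        = Polynomial.aeval M p - p.eval (Λ i) • 1 := by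
      simpa [_root_.map_mul, map_sub, Polynomial.aeval_X, Polynomial.aeval_C,
        Algebra.algebraMap_eq_smul_one] using congrArg (Polynomial.aeval M) h2'
    have h3 : (M - Λ i • 1).mulVec (x i) = (-(Xe (Fin.last d) i)) • w := by
      rw [Matrix.sub_mulVec, hMx i, Matrix.smul_mulVec, Matrix.one_mulVec]
      simp [neg_smul]
    have h4 := congrArg (fun N : Matrix (Fin (d+1)) (Fin (d+1)) ℂ => N.mulVec (x i)) hq'
    simp only [← Matrix.mulVec_mulVec, h3, Matrix.sub_mulVec,
      Matrix.smul_mulVec, Matrix.one_mulVec, Matrix.mulVec_smul] at h4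
    rw [eq_sub_iff_add_eq] at h4
    rw [← h4]
    module
  -- e₁ as a combination of columns
  have he1 : (Pi.single 0 1 : Fin (d + 1) → ℂ) = ∑ i, Xe⁻¹ i 0 • x i := by
    have h5 : (Xe * Xe⁻¹).mulVec (Pi.single 0 1 : Fin (d + 1) → ℂ)
        = (Pi.single 0 1 : Fin (d + 1) → ℂ) := by
      rw [Matrix.mul_nonsing_inv Xe hXe, Matrix.one_mulVec]
    rw [← h5, ← Matrix.mulVec_mulVec]
    ext j
    simp only [Finset.sum_apply, Pi.smul_apply, smul_eq_mul, hxval]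
    simp only [Matrix.mulVec, dotProduct, Pi.single_apply, mul_ite, mul_one, mul_zero,
      Finset.sum_ite_eq', Finset.mem_univ, if_true]
    exact Finset.sum_congr rfl fun k _ => mul_comm _ _
  -- expand both sides over the sum
  have hsum : ∀ (N : Matrix (Fin (d+1)) (Fin (d+1)) ℂ),
      N.mulVec (Pi.single 0 1 : Fin (d + 1) → ℂ) = ∑ i, Xe⁻¹ i 0 • N.mulVec (x i) := by
    intro N
    rw [he1]
    rw [show (∑ i, Xe⁻¹ i 0 • x i) = ∑ i, (Xe⁻¹ i 0 • x i) from rfl]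
    induction' (Finset.univ : Finset (Fin (d+1))) using Finset.induction with a s ha ih
    · simp [Matrix.mulVec_zero]
    · rw [Finset.sum_insert ha, Finset.sum_insert ha, Matrix.mulVec_add, Matrix.mulVec_smul, ih]
  rw [hsum, hsum, ← Finset.sum_sub_distrib]
  apply Finset.sum_congr rfl
  intro i _
  rw [aeval_mulVec_eig A (x i) (Λ i) (heig i) p, key i, smul_sub, smul_smul, sub_sub_cancel,
    smul_smul, mul_comm (Xe⁻¹ i 0)]
end

section
/- Let M ∈ ℂ^{d×d} be upper Hessenberg and set m_d := ∏_{j=1}^{d−1} M_{j+1,j}. Let w ∈ ℂ^d and suppose M + w e_d^T is diagonalizable with pairwise distinct eigenvalues λ₁,…,λ_d, and let ω(z) = ∏_{i=1}^d (z − λ_i). Then for every polynomial p ∈ ℂ[X], p(M + w e_d^T) e₁ − p(M) e₁ = m_d · Σ_{i=1}^d (1/ω′(λ_i)) · p[M, λ_i] · w, where ω′(λ_i) = ∏_{j≠i} (λ_i − λ_j). -/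
/-!
Write `A = M + w e_dᵀ` and split `e₁ = ∑ vᵢ` into eigenvectors of `A`, `A vᵢ = λᵢ vᵢ`.
Since `(M - λᵢ) vᵢ = -(vᵢ)_d w` and `p(M) - p(λᵢ) = p[M, λᵢ] (M - λᵢ)`, we get
`p(M) vᵢ = p(λᵢ) vᵢ - (vᵢ)_d p[M, λᵢ] w`, so `p(A) e₁ - p(M) e₁ = ∑ (vᵢ)_d p[M, λᵢ] w`.
The weights `cᵢ = (vᵢ)_d` satisfy `∑ cᵢ f(λᵢ) = f(A)_{d,1}`, and for `deg f ≤ d - 1` the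
Hessenberg shape of `A` makes this `m_d` times the coefficient of `X^{d-1}` in `f`.
Taking `f = ∏_{j ≠ i} (X - λⱼ)` gives `cᵢ ω'(λᵢ) = m_d`.
-/

open Matrix Finset

open Polynomial

theorem divDiffPoly_mul_X_sub_C (p : ℂ[X]) (μ : ℂ) :
    divDiffPoly p μ * (X - C μ) = p - C (p.eval μ) := by
  rw [mul_comm, divDiffPoly, mul_div_eq_iff_isRoot]
  simp

theorem eq_mul_inv_prod_sub_of_sum_mul_eval {K : Type*} [Field K] {n : ℕ}
    {Λ : Fin (n + 1) → K} (hΛ : Function.Injective Λ) {c : Fin (n + 1) → K} {m : K}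
    (h : ∀ f : K[X], f.natDegree ≤ n → ∑ i, c i * f.eval (Λ i) = m * f.coeff n)
    (i : Fin (n + 1)) :
    c i = m * (∏ j ∈ univ.erase i, (Λ i - Λ j))⁻¹ := by
  have hdeg : (Lagrange.nodal (univ.erase i) Λ).natDegree = n := by
    simp [Lagrange.natDegree_nodal]
  have hω : ∏ j ∈ univ.erase i, (Λ i - Λ j) ≠ 0 :=
    prod_ne_zero_iff.2 fun j hj => sub_ne_zero.2 (hΛ.ne (ne_of_mem_erase hj).symm)
  have hcoeff : (Lagrange.nodal (univ.erase i) Λ).coeff n = 1 := by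
    simpa [hdeg] using (Lagrange.nodal_monic (s := univ.erase i) (v := Λ)).coeff_natDegree
  have key := h _ hdeg.le
  rw [sum_eq_single i (fun k _ hk => by rw [Lagrange.eval_nodal_at_node (by simpa), mul_zero])
    (by simp), hcoeff, Lagrange.eval_nodal] at key
  rw [eq_mul_inv_iff_mul_eq₀ hω, key, mul_one]

namespace Matrix

section Eigen

variable {n R : Type*} [Fintype n] [DecidableEq n] [CommRing R]

theorem pow_mulVec_of_mulVec_eq_smul {A : Matrix n n R} {v : n → R} {μ : R}
    (hv : A *ᵥ v = μ • v) (k : ℕ) : A ^ k *ᵥ v = μ ^ k • v := by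
  induction k with
  | zero => simp
  | succ k ih => rw [pow_succ, ← mulVec_mulVec, hv, mulVec_smul, ih, smul_smul, pow_succ']

theorem aeval_mulVec_of_mulVec_eq_smul {A : Matrix n n R} {v : n → R} {μ : R}
    (hv : A *ᵥ v = μ • v) (p : R[X]) : aeval A p *ᵥ v = p.eval μ • v := by
  induction p using Polynomial.induction_on' with
  | add p q hp hq => simp [add_mulVec, hp, hq, add_smul]
  | monomial k a =>
    rw [aeval_monomial, Algebra.algebraMap_eq_smul_one, smul_mul_assoc, one_mul, smul_mulVec,
      pow_mulVec_of_mulVec_eq_smul hv, eval_monomial, smul_smul]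

/-- The `i`-th term `(P⁻¹ x)ᵢ • Pᵢ` of the expansion of `x` in the columns of `P`. -/
noncomputable def columnComponent (P : Matrix n n R) (x : n → R) (i : n) : n → R :=
  P *ᵥ Pi.single i ((P⁻¹ *ᵥ x) i)

variable {P : Matrix n n R}

theorem sum_columnComponent (hP : IsUnit P.det) (x : n → R) :
    ∑ i, columnComponent P x i = x := by
  simp only [columnComponent]
  rw [← mulVec_sum, univ_sum_single, mulVec_mulVec, mul_nonsing_inv P hP, one_mulVec]

theorem mulVec_columnComponent (hP : IsUnit P.det) (Λ : n → R) (x : n → R) (i : n) :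
    (P * diagonal Λ * P⁻¹) *ᵥ columnComponent P x i = Λ i • columnComponent P x i := by
  rw [columnComponent, mulVec_mulVec, Matrix.mul_assoc, Matrix.mul_assoc, nonsing_inv_mul P hP,
    Matrix.mul_one, ← mulVec_mulVec, diagonal_mulVec_single, ← mulVec_smul, ← smul_eq_mul,
    Pi.single_smul']

theorem dotProduct_aeval_mulVec_eq_sum (hP : IsUnit P.det) (Λ : n → R) (u x : n → R)
    (f : R[X]) :
    u ⬝ᵥ (aeval (P * diagonal Λ * P⁻¹) f *ᵥ x)
      = ∑ i, (u ⬝ᵥ columnComponent P x i) * f.eval (Λ i) := by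
  conv_lhs => rw [← sum_columnComponent hP x]
  simp only [mulVec_sum, dotProduct_sum,
    aeval_mulVec_of_mulVec_eq_smul (mulVec_columnComponent hP Λ x _), dotProduct_smul,
    smul_eq_mul, mul_comm]

end Eigen

def IsUpperHessenberg {R : Type*} [Zero R] {n : ℕ} (H : Matrix (Fin n) (Fin n) R) : Prop :=
  ∀ i j : Fin n, (j : ℕ) + 1 < i → H i j = 0

namespace IsUpperHessenberg

variable {R : Type*} [CommSemiring R] {n : ℕ}

theorem add_vecMulVec_single_last {H : Matrix (Fin (n + 1)) (Fin (n + 1)) R}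
    (hH : H.IsUpperHessenberg) (w : Fin (n + 1) → R) :
    (H + vecMulVec w (Pi.single (Fin.last n) 1)).IsUpperHessenberg := by
  intro i j hij
  have hj : j ≠ Fin.last n := fun h => by simp [h] at hij; omega
  simp [vecMulVec_apply, Pi.single_eq_of_ne hj, hH i j hij]

theorem pow_apply_eq_zero {H : Matrix (Fin n) (Fin n) R} (hH : H.IsUpperHessenberg) (m : ℕ)
    {i j : Fin n} (hij : (j : ℕ) + m < i) : (H ^ m) i j = 0 := by
  induction m generalizing i with
  | zero => exact one_apply_ne (by rintro rfl; omega)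
  | succ m ih =>
    rw [pow_succ', mul_apply]
    refine sum_eq_zero fun k _ => ?_
    by_cases hk : (k : ℕ) + 1 < i
    · rw [hH i k hk, zero_mul]
    · rw [ih (by omega), mul_zero]

theorem pow_apply_zero_eq_prod {H : Matrix (Fin (n + 1)) (Fin (n + 1)) R}
    (hH : H.IsUpperHessenberg) (m : ℕ) (hm : m < n + 1) :
    (H ^ m) ⟨m, hm⟩ 0 = ∏ t : Fin m, H ⟨t + 1, by omega⟩ ⟨t, by omega⟩ := by
  induction m with
  | zero => simp
  | succ m ih =>
    rw [pow_succ', mul_apply, sum_eq_single ⟨m, by omega⟩, ih (by omega), Fin.prod_univ_castSucc,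
      mul_comm]
    · rfl
    · intro k _ hk
      have hk' : (k : ℕ) ≠ m := fun h => hk (Fin.ext h)
      rcases lt_or_gt_of_ne hk' with hlt | hgt
      · rw [hH _ _ (by simp; omega), zero_mul]
      · rw [hH.pow_apply_eq_zero m (by simp; omega), mul_zero]
    · simp

theorem aeval_apply_last_zero {H : Matrix (Fin (n + 1)) (Fin (n + 1)) R}
    (hH : H.IsUpperHessenberg) {f : R[X]} (hf : f.natDegree ≤ n) :
    aeval H f (Fin.last n) 0 = f.coeff n * ∏ t : Fin n, H t.succ t.castSucc := by
  rw [aeval_eq_sum_range' (Nat.lt_succ_of_le hf), Matrix.sum_apply, sum_range_succ,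
    sum_eq_zero fun m hm => ?_, zero_add]
  · simp only [smul_apply, smul_eq_mul]
    exact congrArg _ (hH.pow_apply_zero_eq_prod n (by omega))
  · rw [smul_apply, hH.pow_apply_eq_zero m (by simp at hm ⊢; omega), smul_zero]

end IsUpperHessenberg

theorem aeval_mulVec_of_add_vecMulVec_mulVec_eq_smul {n : Type*} [Fintype n] [DecidableEq n]
    {M : Matrix n n ℂ} {w u v : n → ℂ} {μ : ℂ} (hv : (M + vecMulVec w u) *ᵥ v = μ • v)
    (p : ℂ[X]) :
    aeval M p *ᵥ v = p.eval μ • v - (u ⬝ᵥ v) • aeval M (divDiffPoly p μ) *ᵥ w := by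
  have hshift : (M - algebraMap ℂ _ μ) *ᵥ v = -((u ⬝ᵥ v) • w) := by
    rw [add_mulVec, vecMulVec_mulVec, op_smul_eq_smul] at hv
    rw [Algebra.algebraMap_eq_smul_one, sub_mulVec, smul_mulVec, one_mulVec, ← hv]
    abel
  have hp : aeval M p = aeval M (divDiffPoly p μ) * (M - algebraMap ℂ _ μ)
      + algebraMap ℂ _ (p.eval μ) := by
    have h := congrArg (aeval M) (divDiffPoly_mul_X_sub_C p μ)
    rw [map_mul, map_sub, map_sub, aeval_X, aeval_C, aeval_C] at h
    rw [h, sub_add_cancel]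
  rw [hp, add_mulVec, ← mulVec_mulVec, hshift, Algebra.algebraMap_eq_smul_one, smul_mulVec,
    one_mulVec, mulVec_neg, mulVec_smul]
  abel

theorem aeval_add_vecMulVec_mulVec_sub_aeval_mulVec {n : Type*} [Fintype n] [DecidableEq n]
    {M P : Matrix n n ℂ} {w u Λ : n → ℂ} (hP : IsUnit P.det)
    (hdiag : M + vecMulVec w u = P * diagonal Λ * P⁻¹) (x : n → ℂ) (p : ℂ[X]) :
    aeval (M + vecMulVec w u) p *ᵥ x - aeval M p *ᵥ x
      = ∑ i, (u ⬝ᵥ columnComponent P x i) • aeval M (divDiffPoly p (Λ i)) *ᵥ w := by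
  conv_lhs => rw [← sum_columnComponent hP x]
  rw [mulVec_sum, mulVec_sum, ← sum_sub_distrib]
  refine sum_congr rfl fun i _ => ?_
  have hv := mulVec_columnComponent hP Λ x i
  rw [← hdiag] at hv
  rw [aeval_mulVec_of_mulVec_eq_smul hv, aeval_mulVec_of_add_vecMulVec_mulVec_eq_smul hv,
    sub_sub_cancel]

end Matrix

/-- **Theorem 5.4, eq. (16) (polynomial version).**  For an upper Hessenberg `M`
with `m_d = ∏_{j} M_{j+1,j}`, if `M + w e_dᵀ` is diagonalizable with pairwise
distinct eigenvalues `λ_1, …, λ_d`, then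
`p(M + w e_dᵀ) e₁ - p(M) e₁ = m_d ∑ i (1/ω'(λ_i)) p[M, λ_i] w`, where
`ω'(λ_i) = ∏_{j ≠ i} (λ_i - λ_j)`.  (The paper's `d` is written as `d+1`.) -/
theorem rank_one_update_divided_difference_form
    {d : ℕ}
    (M : Matrix (Fin (d + 1)) (Fin (d + 1)) ℂ)
    (hHess : ∀ i j : Fin (d + 1), (j : ℕ) + 1 < (i : ℕ) → M i j = 0)
    (w : Fin (d + 1) → ℂ)
    (Xe : Matrix (Fin (d + 1)) (Fin (d + 1)) ℂ) (Λ : Fin (d + 1) → ℂ)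
    (hXe : IsUnit Xe.det)
    (hdiag : M + vecMulVec w (Pi.single (Fin.last d) 1 : Fin (d + 1) → ℂ)
      = Xe * diagonal Λ * Xe⁻¹)
    (hdistinct : Function.Injective Λ)
    (p : Polynomial ℂ) :
    (Polynomial.aeval (M + vecMulVec w (Pi.single (Fin.last d) 1 : Fin (d + 1) → ℂ)) p).mulVec
        (Pi.single 0 1 : Fin (d + 1) → ℂ)
      - (Polynomial.aeval M p).mulVec (Pi.single 0 1 : Fin (d + 1) → ℂ)
    = (∏ j : Fin d, M j.succ j.castSucc) •
        ∑ i, (∏ j ∈ univ.erase i, (Λ i - Λ j))⁻¹ •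
          (Polynomial.aeval M (divDiffPoly p (Λ i))).mulVec w := by
  set A := M + vecMulVec w (Pi.single (Fin.last d) 1)
  have hA : A.IsUpperHessenberg := IsUpperHessenberg.add_vecMulVec_single_last hHess w
  have hsubdiag : ∀ t : Fin d, A t.succ t.castSucc = M t.succ t.castSucc := fun t => by
    simp [A, vecMulVec_apply]
  have hweight : ∀ i, Pi.single (Fin.last d) 1 ⬝ᵥ columnComponent Xe (Pi.single 0 1) i
      = (∏ j : Fin d, M j.succ j.castSucc) * (∏ j ∈ univ.erase i, (Λ i - Λ j))⁻¹ := by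
    refine eq_mul_inv_prod_sub_of_sum_mul_eval hdistinct fun f hf => ?_
    rw [← dotProduct_aeval_mulVec_eq_sum hXe, ← hdiag, single_one_dotProduct, mulVec_single_one,
      col_apply, hA.aeval_apply_last_zero hf, mul_comm]
    simp only [hsubdiag]
  rw [aeval_add_vecMulVec_mulVec_sub_aeval_mulVec hXe hdiag, smul_sum]
  simp only [hweight, mul_smul]
end

section
/- Let D ⊆ ℂ be an open convex set, let f : ℂ → ℂ be complex differentiable on D, and let z₁,…,z_{d+1} ∈ D be pairwise distinct points. Then the (d-th order) divided difference of f at these nodes satisfies |f[z₁,…,z_{d+1}]| = |Σ_{i=1}^{d+1} f(z_i) / ∏_{j≠i} (z_i − z_j)| ≤ (sup_{ζ ∈ D} |f^{(d)}(ζ)|) / d!, where f^{(d)} denotes the d-th complex derivative of f. -/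
open Finset

/-! Induction on `d`. Removing the last node `w`, the divided difference of `f` equals that of
`g ζ = (f ζ - f w) / (ζ - w)` at the remaining nodes. On the convex set `D`,
`g ζ = ∫₀¹ f'(w + t (ζ - w)) dt`, so differentiating under the integral sign gives
`g⁽ᵈ⁾ ζ = ∫₀¹ tᵈ f⁽ᵈ⁺¹⁾(w + t (ζ - w)) dt`, which is bounded by `sup_D |f⁽ᵈ⁺¹⁾| / (d + 1)`. -/

section DividedDifference

variable {K : Type*} [Field K] {n : ℕ}

def dividedDiff (f : K → K) (z : Fin n → K) : K :=
  ∑ i, f (z i) / ∏ j ∈ univ.erase i, (z i - z j)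

theorem dividedDiff_const {z : Fin (n + 2) → K} (hz : Function.Injective z) (c : K) :
    dividedDiff (fun _ => c) z = 0 := by
  have h := Lagrange.coeff_eq_sum (s := univ) hz.injOn (P := Polynomial.C c)
    (Polynomial.degree_C_lt.trans_le <| by
      rw [card_univ, Fintype.card_fin]; exact_mod_cast le_add_self)
  simpa [dividedDiff] using h.symm

theorem Fin.prod_univ_erase_castSucc {M : Type*} [CommMonoid M] (F : Fin (n + 2) → M)
    (i : Fin (n + 1)) :
    ∏ j ∈ univ.erase i.castSucc, F j = F (Fin.last _) * ∏ j ∈ univ.erase i, F j.castSucc := by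
  simp only [← filter_ne', prod_filter, Fin.prod_univ_castSucc, Fin.castSucc_inj,
    (Fin.castSucc_lt_last i).ne', ne_eq, not_false_eq_true, if_true]
  exact mul_comm _ _

theorem dividedDiff_eq_dividedDiff_castSucc {z : Fin (n + 2) → K} (hz : Function.Injective z)
    (f g : K → K)
    (hfg : ∀ i : Fin (n + 1), f (z i.castSucc) =
      f (z (Fin.last _)) + (z i.castSucc - z (Fin.last _)) * g (z i.castSucc)) :
    dividedDiff f z = dividedDiff g (fun i => z i.castSucc) := by
  set w := z (Fin.last _)
  -- subtract `f w` times the vanishing divided difference of a constant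
  have hconst := dividedDiff_const hz (f w)
  unfold dividedDiff at hconst ⊢
  rw [Fin.sum_univ_castSucc] at hconst ⊢
  rw [← sub_zero (_ + _), ← hconst, add_sub_add_right_eq_sub, ← sum_sub_distrib]
  refine sum_congr rfl fun i _ => ?_
  have hne : z i.castSucc - w ≠ 0 := sub_ne_zero.2 (hz.ne (Fin.castSucc_lt_last i).ne)
  rw [← sub_div, hfg i, add_sub_cancel_left, Fin.prod_univ_erase_castSucc,
    mul_div_mul_left _ _ hne]

end DividedDifference

noncomputable def segmentMoment (h : ℂ → ℂ) (w : ℂ) (k : ℕ) (ζ : ℂ) : ℂ :=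
  ∫ t in (0 : ℝ)..1, (t : ℂ) ^ k * h (w + t * (ζ - w))

section SegmentMoment

variable {D : Set ℂ} {w ζ : ℂ}

theorem Convex.add_ofReal_mul_sub_mem (hconv : Convex ℝ D) (hw : w ∈ D) (hζ : ζ ∈ D) {t : ℝ}
    (ht : t ∈ Set.Icc (0 : ℝ) 1) : w + t * (ζ - w) ∈ D := by
  simpa only [Complex.real_smul] using hconv.add_smul_sub_mem hw hζ ht

theorem ContinuousOn.intervalIntegrable_segment {φ : ℂ → ℂ} (hconv : Convex ℝ D)
    (hφ : ContinuousOn φ D) (hw : w ∈ D) (hζ : ζ ∈ D) (k : ℕ) :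
    IntervalIntegrable (fun t : ℝ => (t : ℂ) ^ k * φ (w + t * (ζ - w)))
      MeasureTheory.volume 0 1 :=
  ContinuousOn.intervalIntegrable_of_Icc zero_le_one <|
    (Complex.continuous_ofReal.pow k).continuousOn.mul <|
      hφ.comp (by fun_prop) fun _ ht => hconv.add_ofReal_mul_sub_mem hw hζ ht

theorem ContinuousOn.exists_bound_near_segments {φ : ℂ → ℂ} (hD : IsOpen D)
    (hconv : Convex ℝ D) (hφ : ContinuousOn φ D) (hw : w ∈ D) (hζ : ζ ∈ D) :
    ∃ ε > 0, ∃ M, Metric.ball ζ ε ⊆ D ∧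
      ∀ x ∈ Metric.ball ζ ε, ∀ t ∈ Set.Icc (0 : ℝ) 1, ‖φ (w + t * (x - w))‖ ≤ M := by
  obtain ⟨ε, hε, hball⟩ := Metric.nhds_basis_closedBall.mem_iff.1 (hD.mem_nhds hζ)
  let seg : ℝ × ℂ → ℂ := fun p => w + p.1 * (p.2 - w)
  have hK : IsCompact (seg '' Set.Icc 0 1 ×ˢ Metric.closedBall ζ ε) :=
    (isCompact_Icc.prod (isCompact_closedBall ζ ε)).image (by fun_prop)
  have hKD : seg '' Set.Icc 0 1 ×ˢ Metric.closedBall ζ ε ⊆ D := by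
    rintro _ ⟨⟨t, x⟩, ⟨ht, hx⟩, rfl⟩
    exact hconv.add_ofReal_mul_sub_mem hw (hball hx) ht
  obtain ⟨M, hM⟩ := hK.exists_bound_of_continuousOn (hφ.mono hKD)
  exact ⟨ε, hε, M, Metric.ball_subset_closedBall.trans hball, fun x hx t ht =>
    hM _ ⟨(t, x), ⟨ht, Metric.ball_subset_closedBall hx⟩, rfl⟩⟩

variable {h : ℂ → ℂ}

theorem hasDerivAt_segmentMoment (hD : IsOpen D) (hconv : Convex ℝ D)
    (hh : DifferentiableOn ℂ h D) (hw : w ∈ D) (hζ : ζ ∈ D) (k : ℕ) :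
    HasDerivAt (segmentMoment h w k) (segmentMoment (deriv h) w (k + 1) ζ) ζ := by
  have hh' : DifferentiableOn ℂ (deriv h) D := (hh.analyticOnNhd hD).deriv.differentiableOn
  obtain ⟨ε, hε, M, hballD, hM⟩ :=
    hh'.continuousOn.exists_bound_near_segments hD hconv hw hζ
  have hIoc : Set.uIoc (0 : ℝ) 1 = Set.Ioc 0 1 := Set.uIoc_of_le zero_le_one
  refine (intervalIntegral.hasDerivAt_integral_of_dominated_loc_of_deriv_le
    (F := fun x t => (t : ℂ) ^ k * h (w + t * (x - w)))
    (F' := fun x t => (t : ℂ) ^ (k + 1) * deriv h (w + t * (x - w)))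
    (bound := fun _ => M) (Metric.ball_mem_nhds ζ hε) ?_
    (hh.continuousOn.intervalIntegrable_segment hconv hw hζ k)
    (hh'.continuousOn.intervalIntegrable_segment hconv hw hζ (k + 1)).def'.aestronglyMeasurable
    ?_ intervalIntegrable_const ?_).2
  · filter_upwards [hD.mem_nhds hζ] with x hx
    exact (hh.continuousOn.intervalIntegrable_segment hconv hw hx k).def'.aestronglyMeasurable
  · refine MeasureTheory.ae_of_all _ fun t ht x hx => ?_
    rw [hIoc] at ht
    rw [norm_mul, norm_pow, Complex.norm_real, Real.norm_of_nonneg ht.1.le]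
    exact (mul_le_of_le_one_left (norm_nonneg _) (pow_le_one₀ ht.1.le ht.2)).trans
      (hM x hx t (Set.Ioc_subset_Icc_self ht))
  · refine MeasureTheory.ae_of_all _ fun t ht x hx => ?_
    rw [hIoc] at ht
    have hpt := hconv.add_ofReal_mul_sub_mem hw (hballD hx) (Set.Ioc_subset_Icc_self ht)
    have hseg : HasDerivAt (fun y : ℂ => w + t * (y - w)) (t : ℂ) x := by
      simpa using (((hasDerivAt_id x).sub_const w).const_mul (t : ℂ)).const_add w
    exact (((hh.differentiableAt (hD.mem_nhds hpt)).hasDerivAt.comp x hseg).const_mul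
      ((t : ℂ) ^ k)).congr_deriv (by ring)

theorem deriv_iterate_segmentMoment (hD : IsOpen D) (hconv : Convex ℝ D)
    (hh : DifferentiableOn ℂ h D) (hw : w ∈ D) (k : ℕ) :
    Set.EqOn (deriv^[k] (segmentMoment h w 0)) (segmentMoment (deriv^[k] h) w k) D := by
  induction k with
  | zero => exact fun _ _ => rfl
  | succ k ih =>
    intro ζ hζ
    have hhk : DifferentiableOn ℂ (deriv^[k] h) D :=
      ((hh.analyticOnNhd hD).iterated_deriv k).differentiableOn
    rw [Function.iterate_succ_apply', (ih.eventuallyEq_of_mem (hD.mem_nhds hζ)).deriv_eq,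
      (hasDerivAt_segmentMoment hD hconv hhk hw hζ k).deriv, ← Function.iterate_succ_apply' deriv]

theorem norm_segmentMoment_le (hconv : Convex ℝ D) (hw : w ∈ D) (hζ : ζ ∈ D) {C : ℝ}
    (hC : ∀ x ∈ D, ‖h x‖ ≤ C) (k : ℕ) :
    ‖segmentMoment h w k ζ‖ ≤ C / (k + 1) := by
  have hbound : ∀ t ∈ Set.uIoc (0 : ℝ) 1, ‖(t : ℂ) ^ k * h (w + t * (ζ - w))‖ ≤ C * t ^ k := by
    intro t ht
    rw [Set.uIoc_of_le zero_le_one] at ht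
    rw [norm_mul, norm_pow, Complex.norm_real, Real.norm_of_nonneg ht.1.le, mul_comm]
    exact mul_le_mul_of_nonneg_right
      (hC _ (hconv.add_ofReal_mul_sub_mem hw hζ (Set.Ioc_subset_Icc_self ht)))
      (pow_nonneg ht.1.le k)
  have hC0 : 0 ≤ C := (norm_nonneg _).trans (hC w hw)
  calc ‖segmentMoment h w k ζ‖ ≤ |∫ t in (0 : ℝ)..1, C * t ^ k| :=
        intervalIntegral.norm_integral_le_abs_of_norm_le
          ((MeasureTheory.ae_restrict_iff' measurableSet_uIoc).2
            (MeasureTheory.ae_of_all _ hbound))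
          ((continuous_const.mul (continuous_pow k)).intervalIntegrable 0 1)
    _ = C / (k + 1) := by
        rw [intervalIntegral.integral_const_mul, integral_pow, one_pow,
          zero_pow k.succ_ne_zero, sub_zero, mul_one_div, abs_of_nonneg (by positivity)]

theorem eq_add_sub_mul_segmentMoment_deriv (hD : IsOpen D) (hconv : Convex ℝ D)
    (hh : DifferentiableOn ℂ h D) (hw : w ∈ D) (hζ : ζ ∈ D) :
    h ζ = h w + (ζ - w) * segmentMoment (deriv h) w 0 ζ := by
  have hh' : DifferentiableOn ℂ (deriv h) D := (hh.analyticOnNhd hD).deriv.differentiableOn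
  have hderiv : ∀ t ∈ Set.uIcc (0 : ℝ) 1, HasDerivAt (fun t : ℝ => h (w + t * (ζ - w)))
      ((ζ - w) * ((t : ℂ) ^ 0 * deriv h (w + t * (ζ - w)))) t := by
    intro t ht
    rw [Set.uIcc_of_le zero_le_one] at ht
    have hpt := hconv.add_ofReal_mul_sub_mem hw hζ ht
    have hseg : HasDerivAt (fun s : ℂ => w + s * (ζ - w)) (ζ - w) t := by
      simpa using ((hasDerivAt_id (t : ℂ)).mul_const (ζ - w)).const_add w
    exact (((hh.differentiableAt (hD.mem_nhds hpt)).hasDerivAt.comp (t : ℂ) hseg).comp_ofReal)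
      |>.congr_deriv (by ring)
  have hftc := intervalIntegral.integral_eq_sub_of_hasDerivAt hderiv
    ((hh'.continuousOn.intervalIntegrable_segment hconv hw hζ 0).const_mul (ζ - w))
  rw [segmentMoment, ← intervalIntegral.integral_const_mul, hftc]
  simp

end SegmentMoment

theorem norm_dividedDiff_le {D : Set ℂ} (hD : IsOpen D) (hconv : Convex ℝ D) {d : ℕ}
    {f : ℂ → ℂ} (hf : DifferentiableOn ℂ f D) {z : Fin (d + 1) → ℂ}
    (hz : Function.Injective z) (hzD : ∀ i, z i ∈ D) {C : ℝ}
    (hC : ∀ ζ ∈ D, ‖deriv^[d] f ζ‖ ≤ C) :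
    ‖dividedDiff f z‖ ≤ C / d.factorial := by
  induction d generalizing f C with
  | zero => simpa [dividedDiff] using hC (z 0) (hzD 0)
  | succ d ih =>
    set w := z (Fin.last _)
    have hw : w ∈ D := hzD _
    have hf' : DifferentiableOn ℂ (deriv f) D := (hf.analyticOnNhd hD).deriv.differentiableOn
    have hg : DifferentiableOn ℂ (segmentMoment (deriv f) w 0) D := fun ζ hζ =>
      (hasDerivAt_segmentMoment hD hconv hf' hw hζ 0).differentiableAt.differentiableWithinAt
    have hgC : ∀ ζ ∈ D, ‖deriv^[d] (segmentMoment (deriv f) w 0) ζ‖ ≤ C / (d + 1) := by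
      intro ζ hζ
      rw [deriv_iterate_segmentMoment hD hconv hf' hw d hζ]
      exact norm_segmentMoment_le hconv hw hζ hC d
    rw [dividedDiff_eq_dividedDiff_castSucc hz f (segmentMoment (deriv f) w 0)
      fun i => eq_add_sub_mul_segmentMoment_deriv hD hconv hf hw (hzD _)]
    calc _ ≤ C / (d + 1) / d.factorial :=
          ih hg (hz.comp (Fin.castSucc_injective _)) (fun _ => hzD _) hgC
      _ = C / (d + 1).factorial := by rw [Nat.factorial_succ, div_div]; push_cast; ring

/-- **Proposition 5.6 (Genocchi–Hermite bound).**  For `f` complex differentiable on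
an open convex set `D` containing the pairwise distinct nodes `z₁, …, z_{d+1}`,
the `d`-th order divided difference satisfies
`|f[z₁,…,z_{d+1}]| ≤ sup_{ζ ∈ D} |f⁽ᵈ⁾(ζ)| / d!` (stated with any upper bound `C`
for `|f⁽ᵈ⁾|` on `D`, which also covers the case of an infinite supremum). -/
theorem divided_difference_derivative_bound
    {d : ℕ} (D : Set ℂ) (hD : IsOpen D) (hconv : Convex ℝ D)
    (f : ℂ → ℂ) (hf : DifferentiableOn ℂ f D)
    (z : Fin (d + 1) → ℂ) (hz : Function.Injective z) (hzD : ∀ i, z i ∈ D)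
    (C : ℝ) (hC : ∀ ζ ∈ D, ‖iteratedDerivWithin d f D ζ‖ ≤ C) :
    ‖∑ i, f (z i) / ∏ j ∈ univ.erase i, (z i - z j)‖ ≤
      C / (Nat.factorial d : ℝ) :=
  norm_dividedDiff_le hD hconv hf hz hzD fun ζ hζ => by
    simpa only [iteratedDerivWithin_of_isOpen_eq_iterate hD hζ] using hC ζ hζ
end

section
/- Let N ∈ ℂ^{d×d} be lower Hessenberg with N_{k,k+1} ≠ 0 for all k = 1,…,d−1, let w ∈ ℂ^d, and let (λ, y) with y = (η₁,…,η_d)^T, ‖y‖ = 1, be an eigenpair of N̂ := N + e_d w^*, i.e., N̂ y = λ y. Then for every k = 1,…,d−1, |η_{k+1}| ≤ (|N_{k,k} − λ| / |N_{k,k+1}|) · |η_k| + ‖N_{k,1:k−1}‖ / |N_{k,k+1}|, where N_{k,1:k−1} denotes the vector (N_{k,1},…,N_{k,k−1}) (empty, with norm 0, when k = 1). -/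
/-!
Row `k < d` of `N̂ y = λ y` does not see the rank-one term `e_d w^*`, and since `N` is lower
Hessenberg it reads `∑_{j<k} N_{kj} η_j + N_{kk} η_k + N_{k,k+1} η_{k+1} = λ η_k`. Solving for
`η_{k+1}` and bounding the first sum by Cauchy–Schwarz together with `‖y‖ = 1` gives the estimate.
-/

open Matrix Finset

noncomputable def eunormC {m : ℕ} (v : Fin m → ℂ) : ℝ :=
  Real.sqrt (∑ i, ‖v i‖ ^ 2)

namespace Matrix

theorem add_vecMulVec_mulVec_apply_of_eq_zero {R m : Type*} [Semiring R] [Fintype m]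
    (N : Matrix m m R) (u v y : m → R) {i : m} (hu : u i = 0) :
    ((N + vecMulVec u v) *ᵥ y) i = (N *ᵥ y) i := by
  simp [add_mulVec, vecMulVec_mulVec, hu]

theorem mulVec_castSucc_eq_of_hessenberg {R : Type*} [CommSemiring R] {d : ℕ}
    (N : Matrix (Fin (d + 1)) (Fin (d + 1)) R)
    (hHess : ∀ i j : Fin (d + 1), (i : ℕ) + 1 < (j : ℕ) → N i j = 0)
    (y : Fin (d + 1) → R) (k : Fin d) :
    (N *ᵥ y) k.castSucc =
      ∑ j ∈ univ.filter (· < k.castSucc), N k.castSucc j * y j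
        + N k.castSucc k.castSucc * y k.castSucc + N k.castSucc k.succ * y k.succ := by
  set F := univ.filter (· < k.castSucc)
  have hcs : k.castSucc ∉ F := by simp [F]
  have hs : k.succ ∉ insert k.castSucc F := by
    simp [F, Fin.ext_iff, Fin.lt_def]
  rw [mulVec, dotProduct, ← sum_subset (subset_univ (insert k.succ (insert k.castSucc F))),
    sum_insert hs, sum_insert hcs]
  · ring
  · intro j _ hj
    simp only [F, mem_insert, mem_filter, mem_univ, true_and, not_or, Fin.ext_iff,
      Fin.lt_def, Fin.val_succ, Fin.val_castSucc] at hj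
    rw [hHess _ _ (by simp only [Fin.val_castSucc]; omega), zero_mul]

end Matrix

theorem norm_sum_mul_le_sqrt_mul_sqrt {ι 𝕜 : Type*} [SeminormedRing 𝕜] (s : Finset ι)
    (a y : ι → 𝕜) :
    ‖∑ j ∈ s, a j * y j‖ ≤ √(∑ j ∈ s, ‖a j‖ ^ 2) * √(∑ j ∈ s, ‖y j‖ ^ 2) :=
  (norm_sum_le _ _).trans <| (sum_le_sum fun _ _ => norm_mul_le _ _).trans <|
    Real.sum_mul_le_sqrt_mul_sqrt _ _ _

theorem sqrt_sum_sq_le_eunormC {m : ℕ} (s : Finset (Fin m)) (y : Fin m → ℂ) :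
    √(∑ i ∈ s, ‖y i‖ ^ 2) ≤ eunormC y :=
  Real.sqrt_le_sqrt <| sum_le_sum_of_subset_of_nonneg (subset_univ s) fun _ _ _ => sq_nonneg _

theorem norm_mul_le_of_add_add_eq {𝕜 : Type*} [NormedField 𝕜] {S a x c b lam : 𝕜}
    (h : S + a * x + c * b = lam * x) :
    ‖c‖ * ‖b‖ ≤ ‖a - lam‖ * ‖x‖ + ‖S‖ := by
  calc ‖c‖ * ‖b‖ = ‖-((a - lam) * x + S)‖ := by
        rw [← norm_mul]; congr 1; linear_combination h
    _ ≤ ‖a - lam‖ * ‖x‖ + ‖S‖ := by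
        rw [norm_neg, ← norm_mul]; exact norm_add_le _ _

/-- The paper's `d` is `d + 1` here; `k.castSucc` and `k.succ` are the paper's `k` and `k + 1`. -/
theorem eigenvector_component_growth
    {d : ℕ}
    (N : Matrix (Fin (d + 1)) (Fin (d + 1)) ℂ)
    (hHess : ∀ i j : Fin (d + 1), (i : ℕ) + 1 < (j : ℕ) → N i j = 0)
    (hsuper : ∀ k : Fin d, N k.castSucc k.succ ≠ 0)
    (w : Fin (d + 1) → ℂ)
    (lam : ℂ) (y : Fin (d + 1) → ℂ)
    (hynorm : eunormC y = 1)
    (heig : (N + vecMulVec (Pi.single (Fin.last d) 1 : Fin (d + 1) → ℂ) (star w)).mulVec y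
      = lam • y) :
    ∀ k : Fin d,
      ‖y k.succ‖ ≤
        ‖N k.castSucc k.castSucc - lam‖ / ‖N k.castSucc k.succ‖
            * ‖y k.castSucc‖
          + Real.sqrt (∑ j ∈ univ.filter (fun j : Fin (d + 1) => j < k.castSucc),
                ‖N k.castSucc j‖ ^ 2)
              / ‖N k.castSucc k.succ‖ := by
  intro k
  set F := univ.filter (fun j : Fin (d + 1) => j < k.castSucc)
  have hrow : ∑ j ∈ F, N k.castSucc j * y j + N k.castSucc k.castSucc * y k.castSucc
      + N k.castSucc k.succ * y k.succ = lam * y k.castSucc := by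
    rw [← N.mulVec_castSucc_eq_of_hessenberg hHess, ← N.add_vecMulVec_mulVec_apply_of_eq_zero _
      (star w) y (Pi.single_eq_of_ne (Fin.castSucc_lt_last k).ne _), heig, Pi.smul_apply,
      smul_eq_mul]
  have hS : ‖∑ j ∈ F, N k.castSucc j * y j‖ ≤ √(∑ j ∈ F, ‖N k.castSucc j‖ ^ 2) := by
    simpa [hynorm] using (norm_sum_mul_le_sqrt_mul_sqrt F _ y).trans
      (mul_le_mul_of_nonneg_left (sqrt_sum_sq_le_eunormC F y) (Real.sqrt_nonneg _))
  rw [div_mul_eq_mul_div, ← add_div, le_div_iff₀ (norm_pos_iff.mpr (hsuper k)), mul_comm]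
  exact (norm_mul_le_of_add_add_eq hrow).trans (by gcongr)
end

section
/- Let A ∈ ℝ^{n×n}. Suppose: (i) 𝒰_d ∈ ℝ^{n×d} has orthonormal columns and ℋ_d := 𝒰_d^T A 𝒰_d; (ii) U_d ∈ ℝ^{n×d}, u_{d+1} ∈ ℝⁿ, H_d ∈ ℝ^{d×d}, h_{d+1,d} ∈ ℝ satisfy A U_d = U_d H_d + h_{d+1,d} u_{d+1} e_d^T; (iii) U_d = 𝒰_d 𝒯_d with 𝒯_d ∈ ℝ^{d×d} upper triangular and invertible, and let τ̂_d denote the (d,d) entry of 𝒯_d. Then for every r ∈ ℝ^d, 𝒯_d (H_d + r e_d^T) 𝒯_d^{-1} = ℋ_d + r̂ e_d^T, where r̂ := (𝒯_d r − h_{d+1,d} 𝒰_d^T u_{d+1}) / τ̂_d. In particular (r = 0), 𝒯_d H_d 𝒯_d^{-1} = ℋ_d − (h_{d+1,d}/τ̂_d) 𝒰_d^T u_{d+1} e_d^T. -/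
/-!
Projecting `A U = U H + h u e_dᵀ` with `𝒰ᵀ` and using `U = 𝒰 𝒯`, `𝒰ᵀ𝒰 = 1` gives
`ℋ 𝒯 = 𝒯 H + h (𝒰ᵀu) e_dᵀ`. Because `𝒯` is upper triangular, `e_dᵀ` is a left eigenvector of `𝒯`
with eigenvalue `τ̂`, hence of `𝒯⁻¹` with eigenvalue `τ̂⁻¹`: right multiplication by `𝒯⁻¹` only
divides a matrix `x e_dᵀ` by `τ̂`. Conjugating `H + r e_dᵀ` by `𝒯` therefore yields
`ℋ + τ̂⁻¹ (𝒯 r - h 𝒰ᵀu) e_dᵀ`.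
-/

open Matrix

namespace Matrix

variable {K : Type*} [Field K] {ι : Type*} [Fintype ι] [DecidableEq ι]

theorem BlockTriangular.single_last_vecMul {R : Type*} [NonAssocSemiring R] {n : ℕ}
    {T : Matrix (Fin (n + 1)) (Fin (n + 1)) R} (hT : T.BlockTriangular id) :
    Pi.single (Fin.last n) 1 ᵥ* T = T (Fin.last n) (Fin.last n) • Pi.single (Fin.last n) 1 := by
  ext j
  rcases (Fin.le_last j).lt_or_eq with hj | rfl
  · simp [hj.ne, show T (Fin.last n) j = 0 from hT hj]
  · simp

theorem vecMul_nonsing_inv_eq_inv_smul {T : Matrix ι ι K} (hT : IsUnit T.det) {v : ι → K} {τ : K}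
    (hv : v ᵥ* T = τ • v) : v ᵥ* T⁻¹ = τ⁻¹ • v := by
  have hτv : τ • (v ᵥ* T⁻¹) = v := by
    rw [← smul_vecMul, ← hv, vecMul_vecMul, mul_nonsing_inv _ hT, vecMul_one]
  rcases eq_or_ne τ 0 with rfl | hτ
  · rw [zero_smul] at hτv
    simp [← hτv]
  · rw [eq_inv_smul_iff₀ hτ, hτv]

theorem transpose_mul_mul_mul_eq_of_mul_eq_mul_add {R : Type*} [Semiring R] {m n : Type*}
    [Fintype m] [Fintype n] [DecidableEq n] {A : Matrix m m R} {Q U : Matrix m n R}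
    {T H : Matrix n n R} {F : Matrix m n R} (hQ : Qᵀ * Q = 1) (hU : U = Q * T)
    (hrel : A * U = U * H + F) : Qᵀ * A * Q * T = T * H + Qᵀ * F := by
  have hQU : Qᵀ * U = T := by rw [hU, ← Matrix.mul_assoc, hQ, Matrix.one_mul]
  calc Qᵀ * A * Q * T = Qᵀ * (A * U) := by simp only [hU, Matrix.mul_assoc]
    _ = T * H + Qᵀ * F := by rw [hrel, Matrix.mul_add, ← Matrix.mul_assoc, hQU]

theorem mul_add_vecMulVec_mul_nonsing_inv {T H M : Matrix ι ι K} (hT : IsUnit T.det)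
    {e x : ι → K} {τ : K} (he : e ᵥ* T = τ • e) (hM : M * T = T * H + vecMulVec x e)
    (r : ι → K) :
    T * (H + vecMulVec r e) * T⁻¹ = M + vecMulVec (τ⁻¹ • (T *ᵥ r - x)) e := by
  have hTH : T * H = M * T - vecMulVec x e := eq_sub_of_add_eq hM.symm
  calc T * (H + vecMulVec r e) * T⁻¹
      = M * (T * T⁻¹) + vecMulVec (T *ᵥ r - x) e * T⁻¹ := by
        rw [Matrix.mul_add, hTH, mul_vecMulVec, sub_vecMulVec]
        simp only [Matrix.add_mul, Matrix.sub_mul, Matrix.mul_assoc]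
        abel
    _ = M + vecMulVec (τ⁻¹ • (T *ᵥ r - x)) e := by
        rw [mul_nonsing_inv _ hT, Matrix.mul_one, vecMulVec_mul,
          vecMul_nonsing_inv_eq_inv_smul hT he, vecMulVec_smul, smul_vecMulVec]

end Matrix

-- The paper's `d` is `d + 1` here, and `e_d` is `Pi.single (Fin.last d) 1`.
/-- **Equations (19)–(22).**  Let `cU` have orthonormal columns with
`ℋ = cUᵀ A cU`, let `A U = U H + h u e_dᵀ`, and let `U = cU cT` with `cT` upper
triangular and invertible with `(d,d)` entry `τ̂`.  Then for every `r`,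
`cT (H + r e_dᵀ) cT⁻¹ = ℋ + r̂ e_dᵀ` with `r̂ = (cT r - h cUᵀ u)/τ̂`; in particular
(`r = 0`) `cT H cT⁻¹ = ℋ - (h/τ̂) cUᵀ u e_dᵀ`.  (The paper's `d` is `d+1` here.) -/
theorem similarity_rank_one_modification
    {n d : ℕ}
    (A : Matrix (Fin n) (Fin n) ℝ)
    (cU : Matrix (Fin n) (Fin (d + 1)) ℝ) (hcU : cUᵀ * cU = 1)
    (U : Matrix (Fin n) (Fin (d + 1)) ℝ) (u : Fin n → ℝ)
    (H : Matrix (Fin (d + 1)) (Fin (d + 1)) ℝ) (h : ℝ)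
    (hrel : A * U = U * H + h • vecMulVec u (Pi.single (Fin.last d) 1 : Fin (d + 1) → ℝ))
    (cT : Matrix (Fin (d + 1)) (Fin (d + 1)) ℝ)
    (hcTupper : ∀ i j : Fin (d + 1), j < i → cT i j = 0)
    (hcTdet : cT.det ≠ 0)
    (hU : U = cU * cT) :
    (∀ r : Fin (d + 1) → ℝ,
      cT * (H + vecMulVec r (Pi.single (Fin.last d) 1 : Fin (d + 1) → ℝ)) * cT⁻¹ =
        cUᵀ * A * cU +
          vecMulVec ((cT (Fin.last d) (Fin.last d))⁻¹ • (cT.mulVec r - h • cUᵀ.mulVec u))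
            (Pi.single (Fin.last d) 1 : Fin (d + 1) → ℝ)) ∧
    cT * H * cT⁻¹ =
      cUᵀ * A * cU -
        (h / cT (Fin.last d) (Fin.last d)) •
          vecMulVec (cUᵀ.mulVec u) (Pi.single (Fin.last d) 1 : Fin (d + 1) → ℝ) := by
  set e : Fin (d + 1) → ℝ := Pi.single (Fin.last d) 1
  have hcTunit : IsUnit cT.det := hcTdet.isUnit
  have hproj : cUᵀ * A * cU * cT = cT * H + vecMulVec (h • cUᵀ *ᵥ u) e := by
    rw [transpose_mul_mul_mul_eq_of_mul_eq_mul_add hcU hU hrel, Matrix.mul_smul, mul_vecMulVec,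
      smul_vecMulVec]
  have hsim := mul_add_vecMulVec_mul_nonsing_inv hcTunit
    (BlockTriangular.single_last_vecMul hcTupper) hproj
  refine ⟨hsim, ?_⟩
  simpa [e, smul_vecMulVec, smul_smul, div_eq_inv_mul, sub_eq_add_neg] using hsim 0
end

section
/- Let M ∈ ℂ^{d×d} be upper Hessenberg with m_d := ∏_{j=1}^{d−1} M_{j+1,j}, let w ∈ ℂ^d, and suppose M + w e_d^T is diagonalizable with pairwise distinct eigenvalues λ₁,…,λ_d. Assume moreover that no λ_i is an eigenvalue of M, let D ⊆ ℂ be an open convex set containing all eigenvalues λ₁,…,λ_d, and let p ∈ ℂ[X] be a polynomial such that there is a constant C ≥ 0 with sup_{ζ ∈ D} |p^{(d)}(ζ)| ≤ C. Then ‖p(M + w e_d^T) e₁ − p(M) e₁‖ ≤ |m_d| · ‖Σ_{i=1}^d (1/ω′(λ_i)) p[M, λ_i]‖ · ‖w‖, where ω′(λ_i) = ∏_{j≠i}(λ_i − λ_j); i.e., ‖p(M + w e_d^T) e₁ − p(M) e₁‖ ≤ |m_d| · ‖h(M)‖ · ‖w‖ with h(z) := Σ_{i=1}^d (1/ω′(λ_i))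 p[z, λ_i] = p[z, λ₁, …, λ_d]. -/
open Matrix Finset

open Polynomial in
lemma my_aeval_conj {n : Type*} [Fintype n] [DecidableEq n]
    (Xe N : Matrix n n ℂ) (h : IsUnit Xe.det) (q : ℂ[X]) :
    Polynomial.aeval (Xe * N * Xe⁻¹) q = Xe * Polynomial.aeval N q * Xe⁻¹ := by
  have h1 : Xe * Xe⁻¹ = 1 := Matrix.mul_nonsing_inv _ h
  have h2 : Xe⁻¹ * Xe = 1 := Matrix.nonsing_inv_mul _ h
  have hpow : ∀ k : ℕ, (Xe * N * Xe⁻¹)^k = Xe * N^k * Xe⁻¹ := by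
    intro k; induction k with
    | zero => simp [h1]
    | succ k ih =>
      rw [pow_succ, pow_succ, ih]
      simp only [Matrix.mul_assoc]
      rw [← Matrix.mul_assoc Xe⁻¹ Xe, h2, Matrix.one_mul]
  induction q using Polynomial.induction_on' with
  | add r s hr hs => simp [hr, hs, Matrix.mul_add, Matrix.add_mul]
  | monomial m c =>
    simp only [aeval_monomial, hpow, Algebra.algebraMap_eq_smul_one, smul_mul_assoc, one_mul,
      Matrix.mul_smul, Matrix.smul_mul]

open Polynomial in
lemma my_aeval_diagonal {n : Type*} [Fintype n] [DecidableEq n]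
    (Λ : n → ℂ) (q : ℂ[X]) :
    Polynomial.aeval (Matrix.diagonal Λ) q = Matrix.diagonal (fun i => q.eval (Λ i)) := by
  induction q using Polynomial.induction_on' with
  | add r s hr hs => simp [hr, hs, Matrix.diagonal_add]
  | monomial m c =>
    rw [aeval_monomial, Matrix.diagonal_pow, Matrix.algebraMap_eq_diagonal,
      Matrix.diagonal_mul_diagonal]
    congr 1
    funext i
    simp [eval_monomial]

open Polynomial in
lemma my_divDiff_mul (p : ℂ[X]) (lam : ℂ) :
    (X - C lam) * divDiffPoly p lam = p - C (p.eval lam) := by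
  obtain ⟨q0, hq0⟩ := Polynomial.X_sub_C_dvd_sub_C_eval (a := lam) (p := p)
  rw [divDiffPoly, hq0, mul_div_cancel_left₀ _ (Polynomial.X_sub_C_ne_zero lam)]

lemma hess_pow_zero' {d : ℕ} (A : Matrix (Fin (d+1)) (Fin (d+1)) ℂ)
    (hA : ∀ i j : Fin (d+1), (j : ℕ) + 1 < (i : ℕ) → A i j = 0) :
    ∀ (k : ℕ) (i j : Fin (d+1)), (j : ℕ) + k < (i : ℕ) → (A ^ k) i j = 0 := by
  intro k
  induction k with
  | zero =>
    intro i j hij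
    simp only [pow_zero]
    exact Matrix.one_apply_ne (by intro h; subst h; omega)
  | succ k ih =>
    intro i j hij
    rw [pow_succ', Matrix.mul_apply]
    apply Finset.sum_eq_zero
    intro l _
    by_cases hl : (j : ℕ) + k < (l : ℕ)
    · rw [ih l j hl, mul_zero]
    · rw [hA i l (by omega), zero_mul]

lemma hess_pow_diag {d : ℕ} (A : Matrix (Fin (d+1)) (Fin (d+1)) ℂ)
    (hA : ∀ i j : Fin (d+1), (j : ℕ) + 1 < (i : ℕ) → A i j = 0) :
    ∀ (k : ℕ) (hk : k ≤ d),
      (A ^ k) ⟨k, by omega⟩ ⟨0, by omega⟩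
        = ∏ j : Fin k, A ⟨(j : ℕ) + 1, by omega⟩ ⟨(j : ℕ), by omega⟩ := by
  intro k
  induction k with
  | zero => intro _; simp [Matrix.one_apply]
  | succ k ih =>
    intro hk
    rw [pow_succ', Matrix.mul_apply]
    rw [Finset.sum_eq_single (⟨k, by omega⟩ : Fin (d+1))]
    · rw [ih (by omega), Fin.prod_univ_castSucc]
      rw [mul_comm]
      congr 1
    · intro l _ hl
      by_cases h2 : k < (l : ℕ)
      · rw [hess_pow_zero' A hA k l ⟨0, by omega⟩ (by simpa using h2), mul_zero]
      · have hlt : (l : ℕ) < k := by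
          rcases lt_or_eq_of_le (not_lt.mp h2) with h | h
          · exact h
          · exact absurd (Fin.ext h : l = ⟨k, by omega⟩) hl
        rw [hA ⟨k+1, by omega⟩ l (by simpa using hlt), zero_mul]
    · intro h; exact absurd (Finset.mem_univ _) h

open Polynomial in
lemma hess_aeval_entry {d : ℕ} (A : Matrix (Fin (d+1)) (Fin (d+1)) ℂ)
    (hA : ∀ i j : Fin (d+1), (j : ℕ) + 1 < (i : ℕ) → A i j = 0)
    (q : ℂ[X]) (hq : q.natDegree ≤ d) :
    (Polynomial.aeval A q) (Fin.last d) 0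
      = q.coeff d * ∏ j : Fin d, A j.succ j.castSucc := by
  rw [Polynomial.aeval_eq_sum_range' (Nat.lt_succ_of_le hq), Matrix.sum_apply]
  rw [Finset.sum_eq_single_of_mem d (Finset.self_mem_range_succ d)]
  · rw [Matrix.smul_apply, smul_eq_mul]
    congr 1
    have h0 : (0 : Fin (d+1)) = ⟨0, by omega⟩ := rfl
    have hl : (Fin.last d) = ⟨d, by omega⟩ := rfl
    rw [h0, hl, hess_pow_diag A hA d le_rfl]
    apply Finset.prod_congr rfl
    intro j _
    congr 1
  · intro i hi hne
    have hid : i < d := by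
      have := Finset.mem_range.mp hi; omega
    rw [Matrix.smul_apply,
      hess_pow_zero' A hA i (Fin.last d) 0 (by simp [Fin.last]; omega), smul_zero]

/-- **Bound (17) (polynomial version).**  For an upper Hessenberg `M` with
`m_d = ∏_j M_{j+1,j}`, if `M + w e_dᵀ` is diagonalizable with pairwise distinct
eigenvalues `λ_i`, none of which is an eigenvalue of `M`, all contained in an open
convex set `D` on which the `d`-th derivative of `p` is bounded by `C ≥ 0`, then
`‖p(M + w e_dᵀ) e₁ - p(M) e₁‖ ≤ |m_d| ‖∑ i (1/ω'(λ_i)) p[M, λ_i]‖ ‖w‖`,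
the matrix norm being the induced Euclidean (2-)norm.
(The paper's `d` is written as `d+1`.) -/
theorem rank_one_update_norm_bound
    {d : ℕ}
    (M : Matrix (Fin (d + 1)) (Fin (d + 1)) ℂ)
    (hHess : ∀ i j : Fin (d + 1), (j : ℕ) + 1 < (i : ℕ) → M i j = 0)
    (w : Fin (d + 1) → ℂ)
    (Xe : Matrix (Fin (d + 1)) (Fin (d + 1)) ℂ) (Λ : Fin (d + 1) → ℂ)
    (hXe : IsUnit Xe.det)
    (hdiag : M + vecMulVec w (Pi.single (Fin.last d) 1 : Fin (d + 1) → ℂ)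
      = Xe * diagonal Λ * Xe⁻¹)
    (hdistinct : Function.Injective Λ)
    (hnoteig : ∀ i, (Λ i • (1 : Matrix (Fin (d + 1)) (Fin (d + 1)) ℂ) - M).det ≠ 0)
    (D : Set ℂ) (hD : IsOpen D) (hconv : Convex ℝ D) (hΛD : ∀ i, Λ i ∈ D)
    (p : Polynomial ℂ)
    (C : ℝ) (hC0 : 0 ≤ C)
    (hC : ∀ ζ ∈ D, ‖(Polynomial.derivative^[d + 1] p).eval ζ‖ ≤ C) :
    eunormC
        ((Polynomial.aeval
            (M + vecMulVec w (Pi.single (Fin.last d) 1 : Fin (d + 1) → ℂ)) p).mulVec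
          (Pi.single 0 1 : Fin (d + 1) → ℂ)
        - (Polynomial.aeval M p).mulVec (Pi.single 0 1 : Fin (d + 1) → ℂ)) ≤
      ‖∏ j : Fin d, M j.succ j.castSucc‖ *
        ‖Matrix.toEuclideanCLM (𝕜 := ℂ)
          (∑ i, (∏ j ∈ univ.erase i, (Λ i - Λ j))⁻¹ •
            Polynomial.aeval M (divDiffPoly p (Λ i)))‖ *
        eunormC w := by
  classical
  set ed : Fin (d+1) → ℂ := (Pi.single (Fin.last d) 1 : Fin (d + 1) → ℂ) with hed
  set e1 : Fin (d+1) → ℂ := (Pi.single 0 1 : Fin (d + 1) → ℂ) with he1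
  set A : Matrix (Fin (d+1)) (Fin (d+1)) ℂ := M + vecMulVec w ed with hAdef
  have hAeq : A = Xe * diagonal Λ * Xe⁻¹ := hdiag
  have h1 : Xe * Xe⁻¹ = 1 := Matrix.mul_nonsing_inv _ hXe
  have h2 : Xe⁻¹ * Xe = 1 := Matrix.nonsing_inv_mul _ hXe
  -- A is Hessenberg with the same subdiagonal as M
  have hAH : ∀ i j : Fin (d+1), (j : ℕ) + 1 < (i : ℕ) → A i j = 0 := by
    intro i j hij
    have hjl : j ≠ Fin.last d := by
      intro h
      have := i.isLt
      rw [h] at hij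
      simp [Fin.last] at hij
      omega
    simp [hAdef, Matrix.vecMulVec_apply, hed, Pi.single_eq_of_ne hjl, hHess i j hij]
  have hsub : ∀ j : Fin d, A j.succ j.castSucc = M j.succ j.castSucc := by
    intro j
    have hne : j.castSucc ≠ Fin.last d := by
      intro h
      have : ((j.castSucc : Fin (d+1)) : ℕ) = d := by rw [h]; rfl
      simp at this
      omega
    simp [hAdef, Matrix.vecMulVec_apply, hed, Pi.single_eq_of_ne hne]
  set md : ℂ := ∏ j : Fin d, M j.succ j.castSucc with hmd
  have hmdA : ∏ j : Fin d, A j.succ j.castSucc = md :=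
    Finset.prod_congr rfl fun j _ => hsub j
  -- spectral projectors
  set P : Fin (d+1) → Matrix (Fin (d+1)) (Fin (d+1)) ℂ :=
    fun i => Xe * diagonal (Pi.single i 1) * Xe⁻¹ with hP
  set B : Fin (d+1) → Matrix (Fin (d+1)) (Fin (d+1)) ℂ :=
    fun i => Polynomial.aeval M (divDiffPoly p (Λ i)) with hB
  set ω : Fin (d+1) → ℂ := fun i => ∏ j ∈ univ.erase i, (Λ i - Λ j) with hw
  have hωne : ∀ i, ω i ≠ 0 := by
    intro i
    apply Finset.prod_ne_zero_iff.mpr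
    intro j hj
    exact sub_ne_zero_of_ne fun h => (Finset.mem_erase.mp hj).1 (hdistinct h).symm
  have haevalA : ∀ q : Polynomial ℂ,
      Polynomial.aeval A q = Xe * diagonal (fun i => q.eval (Λ i)) * Xe⁻¹ := by
    intro q
    rw [hAeq, my_aeval_conj _ _ hXe, my_aeval_diagonal]
  have hdiagsum : ∀ f : Fin (d+1) → ℂ,
      diagonal f = ∑ i, f i • diagonal (Pi.single i 1) := by
    intro f
    ext k l
    rw [Matrix.sum_apply]
    by_cases hkl : k = l
    · subst hkl
      rw [Matrix.diagonal_apply_eq]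
      rw [Finset.sum_eq_single k]
      · simp
      · intro i _ hik
        simp [Pi.single_eq_of_ne (Ne.symm hik)]
      · intro h; exact absurd (Finset.mem_univ _) h
    · rw [Matrix.diagonal_apply_ne _ hkl]
      symm
      apply Finset.sum_eq_zero
      intro i _
      rw [Matrix.smul_apply, Matrix.diagonal_apply_ne _ hkl, smul_zero]
  
  have haevalA' : ∀ q : Polynomial ℂ,
      Polynomial.aeval A q = ∑ i, q.eval (Λ i) • P i := by
    intro q
    rw [haevalA, hdiagsum]
    rw [Finset.mul_sum, Finset.sum_mul]
    apply Finset.sum_congr rfl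
    intro i _
    rw [Matrix.mul_smul, Matrix.smul_mul]
  have hsumP : ∑ i, P i = 1 := by
    have h := hdiagsum (fun _ => (1 : ℂ))
    simp only [one_smul] at h
    have h' : Xe * (∑ i, diagonal (Pi.single i (1 : ℂ))) * Xe⁻¹ = ∑ i, P i := by
      rw [Finset.mul_sum, Finset.sum_mul]
    rw [← h', ← h, Matrix.diagonal_one, Matrix.mul_one, h1]
  have hBeq : ∀ i, Polynomial.eval (Λ i) p • (1 : Matrix (Fin (d+1)) (Fin (d+1)) ℂ)
      - Polynomial.aeval M p = B i * (Λ i • 1 - M) := by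
    intro i
    have key : (divDiffPoly p (Λ i)) * (Polynomial.X - Polynomial.C (Λ i))
        = p - Polynomial.C (p.eval (Λ i)) := by
      rw [mul_comm]; exact my_divDiff_mul p (Λ i)
    have h3 := congrArg (Polynomial.aeval M) key
    rw [_root_.map_mul, map_sub, map_sub, Polynomial.aeval_X, Polynomial.aeval_C,
      Algebra.algebraMap_eq_smul_one] at h3
    have h4 : B i * (Λ i • (1 : Matrix (Fin (d+1)) (Fin (d+1)) ℂ) - M)
        = -(B i * (M - Λ i • 1)) := by
      rw [← mul_neg, neg_sub]
    rw [h4, hB]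
    rw [h3, neg_sub, Polynomial.aeval_C, Algebra.algebraMap_eq_smul_one]
  have hDzero : ∀ i, (Λ i • (1 : Matrix (Fin (d+1)) (Fin (d+1)) ℂ) - diagonal Λ)
      * diagonal (Pi.single i 1) = 0 := by
    intro i
    ext k l
    rw [Matrix.mul_diagonal, Matrix.zero_apply]
    by_cases hl : l = i
    · subst hl
      rw [Matrix.sub_apply, Matrix.smul_apply, Matrix.one_apply, Matrix.diagonal_apply]
      by_cases hk : k = l
      · subst hk; simp
      · simp [hk]
    · rw [Pi.single_eq_of_ne hl, mul_zero]
  have hPkill : ∀ i, (Λ i • (1 : Matrix (Fin (d+1)) (Fin (d+1)) ℂ) - M) * P i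
      = vecMulVec w ed * P i := by
    intro i
    have hAM : Λ i • (1 : Matrix (Fin (d+1)) (Fin (d+1)) ℂ) - M
        = (Λ i • 1 - A) + vecMulVec w ed := by
      rw [hAdef]; abel
    rw [hAM, Matrix.add_mul]
    have hs : Λ i • (1 : Matrix (Fin (d+1)) (Fin (d+1)) ℂ) = Xe * (Λ i • 1) * Xe⁻¹ := by
      rw [Matrix.mul_smul, Matrix.mul_one, Matrix.smul_mul, h1]
    have hzero : (Λ i • (1 : Matrix (Fin (d+1)) (Fin (d+1)) ℂ) - A) * P i = 0 := by
      rw [hAeq, hP, hs, ← Matrix.sub_mul, ← Matrix.mul_sub]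
      simp only [Matrix.mul_assoc]
      rw [← Matrix.mul_assoc Xe⁻¹ Xe, h2, Matrix.one_mul,
        ← Matrix.mul_assoc (Λ i • 1 - diagonal Λ), hDzero i, Matrix.zero_mul,
        Matrix.mul_zero]
    rw [hzero, zero_add]
  have hkey : Polynomial.aeval A p - Polynomial.aeval M p
      = ∑ i, B i * (vecMulVec w ed * P i) := by
    have step1 : Polynomial.aeval A p - Polynomial.aeval M p
        = ∑ i, (Polynomial.eval (Λ i) p • (1 : Matrix (Fin (d+1)) (Fin (d+1)) ℂ)
            - Polynomial.aeval M p) * P i := by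
      calc Polynomial.aeval A p - Polynomial.aeval M p
          = (∑ i, Polynomial.eval (Λ i) p • P i)
            - Polynomial.aeval M p * (∑ i, P i) := by
            rw [haevalA' p, hsumP, Matrix.mul_one]
        _ = ∑ i, (Polynomial.eval (Λ i) p • P i - Polynomial.aeval M p * P i) := by
            rw [Finset.mul_sum, ← Finset.sum_sub_distrib]
        _ = _ := by
            apply Finset.sum_congr rfl
            intro i _
            rw [Matrix.sub_mul, Matrix.smul_mul, Matrix.one_mul]
    rw [step1]
    apply Finset.sum_congr rfl
    intro i _
    rw [hBeq i, Matrix.mul_assoc, hPkill i]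
  have hsummv : ∀ (F : Fin (d+1) → Matrix (Fin (d+1)) (Fin (d+1)) ℂ) (v : Fin (d+1) → ℂ),
      (∑ i, F i).mulVec v = ∑ i, (F i).mulVec v := by
    intro F v
    ext k
    simp only [Matrix.mulVec, dotProduct, Matrix.sum_apply, Finset.sum_apply,
      Finset.sum_mul]
    rw [Finset.sum_comm]
  have hterm : ∀ i, (B i * (vecMulVec w ed * P i)).mulVec e1
      = (P i (Fin.last d) 0) • (B i).mulVec w := by
    intro i
    rw [← Matrix.mulVec_mulVec, ← Matrix.mulVec_mulVec]
    have hcol : (P i).mulVec e1 = fun k => P i k 0 := by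
      rw [he1, Matrix.mulVec_single]
      funext k; simp
    rw [hcol]
    have hvv : (vecMulVec w ed).mulVec (fun k => P i k 0)
        = (P i (Fin.last d) 0) • w := by
      ext k
      simp only [Matrix.mulVec, dotProduct, Matrix.vecMulVec_apply, hed,
        Pi.smul_apply, smul_eq_mul]
      rw [Finset.sum_eq_single (Fin.last d)]
      · rw [Pi.single_eq_same]; ring
      · intro l _ hl
        rw [Pi.single_eq_of_ne hl, mul_zero, zero_mul]
      · intro h; exact absurd (Finset.mem_univ _) h
    rw [hvv, Matrix.mulVec_smul]
  have hPentry : ∀ i, P i (Fin.last d) 0 = md * (ω i)⁻¹ := by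
    intro i
    have hl : Polynomial.aeval A (∏ j ∈ univ.erase i, (Polynomial.X - Polynomial.C (Λ j)))
        = ω i • P i := by
      rw [haevalA]
      have hev : (fun k => Polynomial.eval (Λ k)
            (∏ j ∈ univ.erase i, (Polynomial.X - Polynomial.C (Λ j))))
          = ω i • (Pi.single i 1 : Fin (d+1) → ℂ) := by
        funext k
        rw [Pi.smul_apply, smul_eq_mul]
        rw [Polynomial.eval_prod]
        by_cases hk : k = i
        · subst hk
          simp [hw]
        · rw [Finset.prod_eq_zero (Finset.mem_erase.mpr ⟨hk, Finset.mem_univ k⟩) (by simp)]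
          rw [Pi.single_eq_of_ne hk, mul_zero]
      rw [hev, Matrix.diagonal_smul, Matrix.mul_smul, Matrix.smul_mul, hP]
    have hdeg : (∏ j ∈ univ.erase i, (Polynomial.X - Polynomial.C (Λ j))).natDegree = d := by
      rw [Polynomial.natDegree_prod _ _ (fun j _ => Polynomial.X_sub_C_ne_zero (Λ j))]
      simp [Polynomial.natDegree_X_sub_C, Finset.card_erase_of_mem (Finset.mem_univ i),
        Finset.card_univ]
    have hmon : (∏ j ∈ univ.erase i, (Polynomial.X - Polynomial.C (Λ j))).Monic :=
      Polynomial.monic_prod_of_monic _ _ (fun j _ => Polynomial.monic_X_sub_C (Λ j))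
    have hcoeff : (∏ j ∈ univ.erase i, (Polynomial.X - Polynomial.C (Λ j))).coeff d = 1 := by
      have hcn := hmon.coeff_natDegree
      rwa [hdeg] at hcn
    have hentry := hess_aeval_entry A hAH _ (le_of_eq hdeg)
    rw [hl, hcoeff, one_mul, hmdA, Matrix.smul_apply, smul_eq_mul] at hentry
    exact (eq_mul_inv_iff_mul_eq₀ (hωne i)).mpr (by rw [mul_comm]; exact hentry)
  have hvec : (Polynomial.aeval A p).mulVec e1 - (Polynomial.aeval M p).mulVec e1
      = md • ((∑ i, (ω i)⁻¹ • B i).mulVec w) := by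
    rw [← Matrix.sub_mulVec, hkey, hsummv, hsummv, Finset.smul_sum]
    apply Finset.sum_congr rfl
    intro i _
    rw [hterm i, hPentry i, Matrix.smul_mulVec, smul_smul]
  have heun : ∀ v : Fin (d+1) → ℂ,
      eunormC v = ‖(WithLp.equiv 2 (Fin (d+1) → ℂ)).symm v‖ := by
    intro v
    rw [eunormC, EuclideanSpace.norm_eq]
    rfl

  have hgoalmat : (∑ i, (∏ j ∈ univ.erase i, (Λ i - Λ j))⁻¹ •
        Polynomial.aeval M (divDiffPoly p (Λ i)))
      = ∑ i, (ω i)⁻¹ • B i := by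
    simp only [hw, hB]
  rw [hgoalmat, hvec]
  set H : Matrix (Fin (d+1)) (Fin (d+1)) ℂ := ∑ i, (ω i)⁻¹ • B i with hH
  have h5 : eunormC (md • H.mulVec w) = ‖md‖ * eunormC (H.mulVec w) := by
    rw [heun, heun, WithLp.equiv_symm_apply, WithLp.toLp_smul, norm_smul]
  rw [h5, mul_assoc]
  apply mul_le_mul_of_nonneg_left _ (norm_nonneg _)
  rw [heun, heun]
  have h6 : (WithLp.equiv 2 (Fin (d+1) → ℂ)).symm (H.mulVec w)
      = Matrix.toEuclideanCLM (𝕜 := ℂ) H ((WithLp.equiv 2 (Fin (d+1) → ℂ)).symm w) := by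
    rfl
  rw [h6]
  exact ContinuousLinearMap.le_opNorm _ _
end
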